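/- arXiv:2009.09409 — 8 statements merged into one kernel-verified Lean document; each statement's English description precedes it below -/
import Mathlib

section
/- For all n ≥ 1, ∑_{k=0}^{⌊n/2⌋} C(n,2k) (5/4)^k L_{n-2k} E_{2k} = 2^{1-n}, where L_m is the m-th Lucas number and E_m is the m-th Euler number. -/
def lucas : ℕ → ℕ
  | 0 => 2
  | 1 => 1
  | n + 2 => lucas (n + 1) + lucas n

noncomputable def eulerPoly : ℕ → Polynomial ℚ
  | n => Polynomial.X ^ n - Polynomial.C (1/2 : ℚ) *
      ∑ k : Fin n, (n.choose k : ℚ) • eulerPoly k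

noncomputable def eulerNumber (n : ℕ) : ℚ := 2 ^ n * (eulerPoly n).eval (1/2)

open Polynomial Finset

noncomputable def E (n : ℕ) (x : ℝ) : ℝ := Polynomial.aeval x (eulerPoly n)

lemma E_def (n : ℕ) (x : ℝ) :
    E n x = x ^ n - (1/2) * ∑ k ∈ range n, (n.choose k : ℝ) * E k x := by
  rw [E, eulerPoly]
  simp only [map_sub, map_mul, map_pow, aeval_X, aeval_C, map_sum, map_smul, Rat.smul_def,
    map_natCast]
  push_cast
  rw [Fin.sum_univ_eq_sum_range (fun k => ((n.choose k : ℝ)) * (aeval x) (eulerPoly k)) n]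
  norm_num [E]

lemma binom_aux (N : ℕ) (y : ℝ) :
    ∑ m ∈ range N, (N.choose m : ℝ) * y ^ m = (1+y)^N - y^N := by
  have h := add_pow y 1 N
  rw [Finset.sum_range_succ] at h
  simp only [one_pow, mul_one, Nat.choose_self, Nat.cast_one] at h
  have h2 : ∑ m ∈ range N, (N.choose m : ℝ) * y ^ m = ∑ m ∈ range N, y ^ m * (N.choose m : ℝ) :=
    Finset.sum_congr rfl fun m _ => mul_comm _ _
  rw [h2, add_comm 1 y]
  linarith [h]

lemma binom_aux2 (N : ℕ) (y : ℝ) :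
    ∑ m ∈ range N, (N.choose (m+1) : ℝ) * y ^ (N - (m+1)) = (1+y)^N - y^N := by
  have h := add_pow (1:ℝ) y N
  rw [Finset.sum_range_succ'] at h
  simp only [one_pow, one_mul, mul_one, Nat.choose_zero_right, Nat.cast_one, Nat.sub_zero] at h
  have h2 : ∑ m ∈ range N, (N.choose (m+1) : ℝ) * y ^ (N - (m+1)) =
      ∑ m ∈ range N, y ^ (N - (m+1)) * (N.choose (m+1) : ℝ) :=
    Finset.sum_congr rfl fun m _ => mul_comm _ _
  rw [h2]
  linarith [h]

lemma claimA (n : ℕ) (y : ℝ) (f : ℕ → ℝ) :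
    ∑ j ∈ range n, (n.choose j : ℝ) * ∑ k ∈ range (j+1), (j.choose k : ℝ) * y^(j-k) * f k
      = ∑ b ∈ range n, (n.choose b : ℝ) * ((1+y)^(n-b) - y^(n-b)) * f b := by
  have step1 : ∀ j ∈ range n, (n.choose j : ℝ) * ∑ k ∈ range (j+1), (j.choose k : ℝ) * y^(j-k) * f k
      = ∑ k ∈ Finset.Ico 0 (j+1), (n.choose j : ℝ) * ((j.choose k : ℝ) * y^(j-k) * f k) := by
    intro j _
    rw [Finset.mul_sum, Finset.range_eq_Ico]
  rw [Finset.sum_congr rfl step1, Finset.range_eq_Ico]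
  have swap := Finset.sum_Ico_Ico_comm 0 n
    (fun k j => (n.choose j : ℝ) * ((j.choose k : ℝ) * y^(j-k) * f k))
  rw [← swap]
  refine Finset.sum_congr rfl fun k hk => ?_
  have hkn : k < n := (Finset.mem_Ico.mp hk).2
  rw [Finset.sum_Ico_eq_sum_range]
  have inner : ∀ m ∈ range (n - k), (n.choose (k+m) : ℝ) * ((((k+m).choose k : ℝ)) * y^((k+m)-k) * f k)
      = (n.choose k : ℝ) * f k * (((n-k).choose m : ℝ) * y ^ m) := by
    intro m hm
    have hm' : m < n - k := Finset.mem_range.mp hm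
    have hc : n.choose (k+m) * (k+m).choose k = n.choose k * (n-k).choose m := by
      have := Nat.choose_mul (n := n) (k := k+m) (s := k) (by omega)
      simpa using this
    have hsub : (k+m) - k = m := by omega
    rw [hsub]
    have hcr : (n.choose (k+m) : ℝ) * ((k+m).choose k : ℝ) = (n.choose k : ℝ) * ((n-k).choose m : ℝ) := by
      exact_mod_cast congrArg (fun t : ℕ => (t : ℝ)) hc
    linear_combination (y ^ m * f k) * hcr
  rw [Finset.sum_congr rfl inner, ← Finset.mul_sum, binom_aux]
  ring

lemma claimB (n : ℕ) (y : ℝ) (f : ℕ → ℝ) :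
    ∑ k ∈ range (n+1), (n.choose k : ℝ) * y^(n-k) * ∑ j ∈ range k, (k.choose j : ℝ) * f j
      = ∑ b ∈ range n, (n.choose b : ℝ) * ((1+y)^(n-b) - y^(n-b)) * f b := by
  have step1 : ∀ k ∈ range (n+1), (n.choose k : ℝ) * y^(n-k) * ∑ j ∈ range k, (k.choose j : ℝ) * f j
      = ∑ j ∈ Finset.Ico 0 k, (n.choose k : ℝ) * y^(n-k) * ((k.choose j : ℝ) * f j) := by
    intro k _
    rw [Finset.mul_sum, Finset.range_eq_Ico]
  rw [Finset.sum_congr rfl step1, Finset.range_eq_Ico]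
  have swap := Finset.sum_Ico_Ico_comm' 0 (n+1)
    (fun j k => (n.choose k : ℝ) * y^(n-k) * ((k.choose j : ℝ) * f j))
  rw [← swap, Finset.sum_Ico_succ_top (Nat.zero_le n)]
  have hlast : ∑ k ∈ Finset.Ico (n+1) (n+1), (n.choose k : ℝ) * y^(n-k) * ((k.choose n : ℝ) * f n) = 0 := by
    simp
  rw [hlast, add_zero, Finset.range_eq_Ico]
  refine Finset.sum_congr rfl fun j hj => ?_
  have hjn : j < n := (Finset.mem_Ico.mp hj).2
  rw [Finset.sum_Ico_eq_sum_range]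
  have hlen : (n+1) - (j+1) = n - j := by omega
  rw [hlen]
  have inner : ∀ m ∈ range (n - j), (n.choose (j+1+m) : ℝ) * y^(n-(j+1+m)) * (((j+1+m).choose j : ℝ) * f j)
      = (n.choose j : ℝ) * f j * (((n-j).choose (m+1) : ℝ) * y ^ ((n-j) - (m+1))) := by
    intro m hm
    have hm' : m < n - j := Finset.mem_range.mp hm
    have hc : n.choose (j+1+m) * (j+1+m).choose j = n.choose j * (n-j).choose (m+1) := by
      have := Nat.choose_mul (n := n) (k := j+1+m) (s := j) (by omega)
      have h1 : j + 1 + m - j = m + 1 := by omega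
      rwa [h1] at this
    have hsub : n - (j+1+m) = (n-j) - (m+1) := by omega
    rw [hsub]
    have hcr : (n.choose (j+1+m) : ℝ) * ((j+1+m).choose j : ℝ) = (n.choose j : ℝ) * ((n-j).choose (m+1) : ℝ) := by
      exact_mod_cast congrArg (fun t : ℕ => (t : ℝ)) hc
    linear_combination (y ^ ((n-j) - (m+1)) * f j) * hcr
  rw [Finset.sum_congr rfl inner, ← Finset.mul_sum, binom_aux2]
  ring

lemma E_add (n : ℕ) (x y : ℝ) :
    E n (x + y) = ∑ k ∈ range (n+1), (n.choose k : ℝ) * y^(n-k) * E k x := by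
  induction n using Nat.strong_induction_on with
  | _ n ih =>
  have hsplit : (∑ k ∈ range (n+1), (n.choose k:ℝ) * y^(n-k) * x^k)
      - (1/2) * (∑ k ∈ range (n+1), (n.choose k:ℝ) * y^(n-k) * ∑ j ∈ range k, (k.choose j:ℝ) * E j x)
      = ∑ k ∈ range (n+1), (n.choose k:ℝ) * y^(n-k) * E k x := by
    rw [Finset.mul_sum, ← Finset.sum_sub_distrib]
    exact Finset.sum_congr rfl fun k _ => by rw [E_def k x]; ring
  rw [← hsplit, E_def n (x+y)]
  have h1 : (x+y)^n = ∑ k ∈ range (n+1), (n.choose k:ℝ) * y^(n-k) * x^k := by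
    rw [add_pow]
    exact Finset.sum_congr rfl fun k _ => by ring
  have h2 : ∑ j ∈ range n, (n.choose j:ℝ) * E j (x+y)
      = ∑ j ∈ range n, (n.choose j : ℝ) * ∑ k ∈ range (j+1), (j.choose k : ℝ) * y^(j-k) * E k x := by
    refine Finset.sum_congr rfl fun j hj => ?_
    rw [ih j (Finset.mem_range.mp hj)]
  rw [h1, h2, claimA n y (fun k => E k x), ← claimB n y (fun k => E k x)]

lemma E_compl (n : ℕ) (x : ℝ) : E n (x + 1) + E n x = 2 * x^n := by
  have h := E_add n x 1
  simp only [one_pow, mul_one] at h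
  rw [Finset.sum_range_succ] at h
  simp only [Nat.choose_self, Nat.cast_one, one_mul] at h
  have hd := E_def n x
  rw [h, hd]
  ring

noncomputable def a (k : ℕ) : ℝ := E k (1/2)

lemma R1 (n : ℕ) : ∑ k ∈ range (n+1), (n.choose k : ℝ) * a k + a n = 2 * (1/2)^n := by
  have h := E_def n (1/2 : ℝ)
  rw [Finset.sum_range_succ]
  simp only [Nat.choose_self, Nat.cast_one, one_mul, a]
  linarith [h]

lemma R2 (n : ℕ) : ∑ k ∈ range (n+1), (n.choose k : ℝ) * (-1)^(n-k) * E k (1/2) + a n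
    = 2 * (-(1/2))^n := by
  have hc := E_compl n (-(1/2) : ℝ)
  have hadd := E_add n (1/2 : ℝ) (-1)
  have e1 : (-(1/2) : ℝ) + 1 = 1/2 := by norm_num
  have e2 : (1/2 : ℝ) + (-1) = -(1/2) := by norm_num
  rw [e1] at hc
  rw [e2] at hadd
  simp only [a]
  have : ∑ k ∈ range (n+1), (n.choose k : ℝ) * (-1)^(n-k) * E k (1/2)
      = ∑ k ∈ range (n+1), (n.choose k : ℝ) * (-1:ℝ)^(n-k) * E k (1/2) := rfl
  linarith [hc, hadd]

lemma a_odd : ∀ n, Odd n → a n = 0 := by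
  intro n
  induction n using Nat.strong_induction_on with
  | _ n ih =>
  intro hodd
  have h1 := R1 n
  have h2 := R2 n
  have hneg : (2:ℝ) * (-(1/2))^n = -(2 * (1/2)^n) := by
    rw [hodd.neg_pow]; ring
  have hsum : ∑ k ∈ range (n+1), (n.choose k : ℝ) * a k
      + ∑ k ∈ range (n+1), (n.choose k : ℝ) * (-1)^(n-k) * E k (1/2) = 2 * a n := by
    rw [← Finset.sum_add_distrib, Finset.sum_range_succ]
    have hz : ∑ k ∈ range n, ((n.choose k : ℝ) * a k + (n.choose k : ℝ) * (-1)^(n-k) * E k (1/2)) = 0 := by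
      refine Finset.sum_eq_zero fun k hk => ?_
      have hkn : k < n := Finset.mem_range.mp hk
      have hae : a k = E k (1/2) := rfl
      rcases Nat.even_or_odd k with hke | hko
      · have hodd' : Odd (n - k) := Nat.Odd.sub_even (le_of_lt hkn) hodd hke
        rw [hodd'.neg_one_pow, ← hae]
        ring
      · rw [← hae, ih k hkn hko]; ring
    rw [hz, Nat.sub_self, pow_zero]
    have hae : a n = E n (1/2) := rfl
    rw [← hae]
    simp only [Nat.choose_self, Nat.cast_one, one_mul, zero_add]
    ring
  linarith [h1, h2, hsum, hneg]

lemma lucas_binet (m : ℕ) :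
    (lucas m : ℝ) = ((1 + Real.sqrt 5)/2)^m + ((1 - Real.sqrt 5)/2)^m := by
  have hs : Real.sqrt 5 ^ 2 = 5 := Real.sq_sqrt (by norm_num)
  induction m using Nat.twoStepInduction with
  | zero => norm_num [lucas]
  | one => norm_num [lucas]
  | more n ih1 ih2 =>
    have hstep : (lucas (n+2) : ℝ) = (lucas (n+1) : ℝ) + (lucas n : ℝ) := by
      rw [show lucas (n+2) = lucas (n+1) + lucas n from rfl]
      push_cast; ring
    rw [hstep, ih1, ih2]
    linear_combination (-((((1 + Real.sqrt 5)/2))^n + (((1 - Real.sqrt 5)/2))^n) / 4) * hs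

lemma sum_split (f : ℕ → ℝ) : ∀ n, ∑ j ∈ range n, f j
    = ∑ k ∈ range ((n+1)/2), f (2*k) + ∑ k ∈ range (n/2), f (2*k+1) := by
  intro n
  induction n with
  | zero => simp
  | succ n ih =>
    rw [Finset.sum_range_succ, ih]
    rcases Nat.even_or_odd n with ⟨m, hm⟩ | ⟨m, hm⟩
    · subst hm
      have e1 : (m + m + 1 + 1)/2 = m + 1 := by omega
      have e2 : (m + m + 1)/2 = m := by omega
      have e3 : (m + m)/2 = m := by omega
      rw [e1, e2, e3, Finset.sum_range_succ, two_mul]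
      ring
    · subst hm
      have e1 : (2*m + 1 + 1 + 1)/2 = m + 1 := by omega
      have e2 : (2*m + 1 + 1)/2 = m + 1 := by omega
      have e3 : (2*m + 1)/2 = m := by omega
      rw [e1, e2, e3, Finset.sum_range_succ (fun k => f (2*k+1)) m]
      ring

theorem stmt0 (n : ℕ) (hn : 1 ≤ n) :
    ∑ k ∈ Finset.range (n / 2 + 1), (n.choose (2 * k) : ℝ) * (5 / 4 : ℝ) ^ k *
      (lucas (n - 2 * k) : ℝ) * ((eulerNumber (2 * k) : ℚ) : ℝ) = (2 : ℝ) ^ ((1 : ℤ) - n) := by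
  have hs : Real.sqrt 5 ^ 2 = 5 := Real.sq_sqrt (by norm_num)
  have hs0 : (0:ℝ) < Real.sqrt 5 := Real.sqrt_pos.mpr (by norm_num)
  set s := Real.sqrt 5 with hsdef
  set f : ℕ → ℝ := fun j => (n.choose j : ℝ) * s^j * a j * (lucas (n-j) : ℝ) with hf
  have hen : ∀ m : ℕ, ((eulerNumber m : ℚ) : ℝ) = 2^m * a m := by
    intro m
    rw [eulerNumber]
    push_cast
    congr 1
    show ((Polynomial.eval (1/2 : ℚ) (eulerPoly m) : ℚ) : ℝ) = E m (1/2)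
    rw [E, show ((1:ℝ)/2) = algebraMap ℚ ℝ (1/2 : ℚ) by norm_num,
      Polynomial.aeval_algebraMap_apply_eq_algebraMap_eval]
    rfl
  have step1 : ∑ k ∈ Finset.range (n / 2 + 1), (n.choose (2 * k) : ℝ) * (5 / 4 : ℝ) ^ k *
      (lucas (n - 2 * k) : ℝ) * ((eulerNumber (2 * k) : ℚ) : ℝ)
      = ∑ k ∈ range (n/2 + 1), f (2*k) := by
    refine Finset.sum_congr rfl fun k _ => ?_
    have hpow : ((5:ℝ)/4)^k * 2^(2*k) = 5^k := by
      rw [pow_mul, ← mul_pow]; norm_num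
    rw [hen (2*k), hf]
    simp only
    rw [pow_mul s 2 k, hs]
    linear_combination ((n.choose (2*k) : ℝ) * (lucas (n-2*k) : ℝ) * a (2*k)) * hpow
  have hsplit := sum_split f (n+1)
  have e1 : (n+1+1)/2 = n/2+1 := by omega
  rw [e1] at hsplit
  have hoddzero : ∑ k ∈ range ((n+1)/2), f (2*k+1) = 0 := by
    refine Finset.sum_eq_zero fun k _ => ?_
    rw [hf]
    simp only
    rw [a_odd (2*k+1) ⟨k, by ring⟩]
    ring
  have step2 : ∑ k ∈ range (n/2+1), f (2*k) = ∑ j ∈ range (n+1), f j := by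
    rw [hsplit, hoddzero, add_zero]
  have key : ∀ v : ℝ, ∑ j ∈ range (n+1), (n.choose j : ℝ) * s^j * a j * v^(n-j)
      = s^n * E n (1/2 + v/s) := by
    intro v
    rw [E_add n (1/2) (v/s), Finset.mul_sum]
    refine Finset.sum_congr rfl fun k hk => ?_
    have hk' : k ≤ n := Nat.lt_succ_iff.mp (Finset.mem_range.mp hk)
    have hss : s^n = s^k * s^(n-k) := by rw [← pow_add]; congr 1; omega
    have hsk : (s:ℝ)^(n-k) ≠ 0 := pow_ne_zero _ hs0.ne'
    rw [hss, div_pow]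
    have hae : a k = E k (1/2) := rfl
    rw [hae]
    field_simp
  have hlucas : ∀ j ∈ range (n+1), f j = (n.choose j:ℝ) * s^j * a j * ((1+s)/2)^(n-j)
      + (n.choose j:ℝ) * s^j * a j * ((1-s)/2)^(n-j) := by
    intro j _
    rw [hf]
    simp only
    rw [lucas_binet (n-j)]
    ring
  have stepF : ∑ j ∈ range (n+1), f j
      = s^n * E n (1/2 + ((1+s)/2)/s) + s^n * E n (1/2 + ((1-s)/2)/s) := by
    rw [Finset.sum_congr rfl hlucas, Finset.sum_add_distrib, key ((1+s)/2), key ((1-s)/2)]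
  have hφs : 1/2 + ((1+s)/2)/s = s/10 + 1 := by
    have h10 : ((1+s)/2)/s = s/10 + 1/2 := by
      rw [div_eq_iff hs0.ne']
      linear_combination (-(1/10)) * hs
    rw [h10]; ring
  have hψs : 1/2 + ((1-s)/2)/s = s/10 := by
    have h10 : ((1-s)/2)/s = s/10 - 1/2 := by
      rw [div_eq_iff hs0.ne']
      linear_combination (-(1/10)) * hs
    rw [h10]; ring
  rw [hφs, hψs] at stepF
  have hc := E_compl n (s/10)
  have hhalf : s * (s/10) = 1/2 := by linear_combination hs/10
  have hfin : s^n * E n (s/10+1) + s^n * E n (s/10) = 2 * (1/2)^n := by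
    have h1 : s^n * E n (s/10+1) + s^n * E n (s/10) = s^n * (E n (s/10+1) + E n (s/10)) := by ring
    have h2 : s^n * (s/10)^n = (1/2)^n := by rw [← mul_pow, hhalf]
    rw [h1, hc]
    linear_combination 2 * h2
  have hrhs : (2 : ℝ) ^ ((1 : ℤ) - n) = 2 * (1/2)^n := by
    rw [zpow_sub₀ (two_ne_zero), zpow_one, zpow_natCast]
    rw [one_div, inv_pow]
    ring
  rw [step1, step2, stepF, hfin, hrhs]
end

section
/- For all n ≥ 0 and j ≥ 1, ∑_{k=0}^{⌊n/2⌋} C(n,2k) (5/4)^k F_j^{2k} L_{j(n-2k)} E_{2k} = 2^{1-n} L_j^n, where F_m and L_m are Fibonacci and Lucas numbers and E_m are Euler numbers. -/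
set_option linter.unnecessarySeqFocus false

open Finset Polynomial

lemma eulerPoly_def (n : ℕ) : eulerPoly n = X ^ n - C (1/2 : ℚ) *
    ∑ k ∈ range n, (n.choose k : ℚ) • eulerPoly k := by
  rw [eulerPoly]
  congr 1
  rw [← Fin.sum_univ_eq_sum_range]

noncomputable def ee (n : ℕ) (x : ℝ) : ℝ := Polynomial.aeval x (eulerPoly n)

lemma ee_def (n : ℕ) (x : ℝ) :
    ee n x = x ^ n - (1/2 : ℝ) * ∑ k ∈ range n, (n.choose k : ℝ) * ee k x := by
  unfold ee
  rw [eulerPoly_def n]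
  simp [map_sum, Rat.smul_def]

lemma ee_sum (n : ℕ) (x : ℝ) :
    ∑ k ∈ range n, (n.choose k : ℝ) * ee k x = 2 * (x ^ n - ee n x) := by
  have := ee_def n x
  linarith

lemma double_sum (n : ℕ) (g : ℕ → ℝ) (y : ℝ) :
    ∑ k ∈ range (n+1), ∑ i ∈ range k,
        (n.choose k : ℝ) * ((k.choose i : ℝ) * g i) * y ^ (n-k)
      = ∑ j ∈ range n, ∑ k ∈ range (j+1),
        (n.choose j : ℝ) * ((j.choose k : ℝ) * g k) * y ^ (j-k) := by
  rw [Finset.sum_sigma', Finset.sum_sigma']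
  apply Finset.sum_bij' (fun p _ => (⟨n - p.1 + p.2, p.2⟩ : Σ _ : ℕ, ℕ))
    (fun q _ => (⟨n - q.1 + q.2, q.2⟩ : Σ _ : ℕ, ℕ))
  · intro a ha
    simp only [Finset.mem_sigma, Finset.mem_range] at ha ⊢
    omega
  · intro a ha
    simp only [Finset.mem_sigma, Finset.mem_range] at ha ⊢
    omega
  · intro a ha
    simp only [Finset.mem_sigma, Finset.mem_range] at ha
    ext <;> simp <;> omega
  · intro a ha
    simp only [Finset.mem_sigma, Finset.mem_range] at ha
    ext <;> simp <;> omega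
  · intro a ha
    simp only [Finset.mem_sigma, Finset.mem_range] at ha
    obtain ⟨k, i⟩ := a
    simp only at ha ⊢
    have hik : i ≤ k := by omega
    have hkn : k ≤ n := by omega
    have h1 : (n - k + i) - i = n - k := by omega
    rw [h1]
    have hcoef : (n.choose k) * (k.choose i) = (n.choose (n-k+i)) * ((n-k+i).choose i) := by
      rw [Nat.choose_mul hik, Nat.choose_mul (by omega : i ≤ n - k + i)]
      congr 1
      have h2 : n - k + i - i = n - k := by omega
      rw [h2]
      have h3 : n - k = (n - i) - (k - i) := by omega
      rw [h3, Nat.choose_symm (by omega)]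
    have := congrArg (fun m : ℕ => (m : ℝ)) hcoef
    push_cast at this
    linear_combination (g i * y ^ (n - k)) * this

lemma ee_add (n : ℕ) (x y : ℝ) :
    ee n (x + y) = ∑ k ∈ range (n + 1), (n.choose k : ℝ) * ee k x * y ^ (n - k) := by
  induction n using Nat.strong_induction_on with
  | _ n ih =>
  have hdef := ee_def n (x + y)
  have hT : ∑ j ∈ range n, (n.choose j : ℝ) * ee j (x + y)
      = ∑ j ∈ range n, ∑ k ∈ range (j+1),
          (n.choose j : ℝ) * ((j.choose k : ℝ) * ee k x) * y ^ (j-k) := by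
    apply Finset.sum_congr rfl
    intro j hj
    rw [ih j (Finset.mem_range.mp hj), Finset.mul_sum]
    apply Finset.sum_congr rfl
    intro k _
    ring
  have hxp : ∀ k : ℕ, (x:ℝ) ^ k
      = ee k x + (1/2) * ∑ i ∈ range k, (k.choose i : ℝ) * ee i x := by
    intro k; have := ee_def k x; linarith
  have hpow : (x + y) ^ n = ∑ k ∈ range (n+1),
      (n.choose k : ℝ) * ee k x * y ^ (n-k)
      + (1/2) * ∑ k ∈ range (n+1), ∑ i ∈ range k,
          (n.choose k : ℝ) * ((k.choose i : ℝ) * ee i x) * y ^ (n-k) := by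
    rw [add_pow, Finset.mul_sum, ← Finset.sum_add_distrib]
    apply Finset.sum_congr rfl
    intro k _
    rw [hxp k]
    simp only [add_mul, Finset.sum_mul, Finset.mul_sum]
    congr 1
    · ring
    · exact Finset.sum_congr rfl fun i _ => by ring
  rw [hdef, hT, hpow, ← double_sum n (fun i => ee i x) y]
  ring

lemma ee_funcEq (n : ℕ) (x : ℝ) : ee n x + ee n (x + 1) = 2 * x ^ n := by
  have h := ee_add n x 1
  simp only [one_pow] at h
  rw [Finset.sum_range_succ, Nat.choose_self] at h
  simp only [mul_one, Nat.cast_one, one_mul] at h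
  rw [ee_sum n x] at h
  rw [h]; ring

lemma ee_reflect (n : ℕ) (x : ℝ) : ee n (1 - x) = (-1 : ℝ) ^ n * ee n x := by
  set P : Polynomial ℝ := (eulerPoly n).map (algebraMap ℚ ℝ) with hP
  have hev : ∀ t : ℝ, P.eval t = ee n t := by
    intro t
    rw [hP, eval_map, ee, aeval_def]
  set H : Polynomial ℝ := P - (-1 : ℝ) ^ n • P.comp (Polynomial.C 1 - X) with hH
  have hHev : ∀ t : ℝ, H.eval t = ee n t - (-1:ℝ)^n * ee n (1 - t) := by
    intro t
    simp only [hH, Polynomial.eval_sub, Polynomial.eval_smul, Polynomial.eval_comp,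
      Polynomial.eval_C, Polynomial.eval_X, smul_eq_mul, hev]
  have key : ∀ t : ℝ, H.eval t + H.eval (t + 1) = 0 := by
    intro t
    rw [hHev, hHev]
    have h1 := ee_funcEq n t
    have h2 := ee_funcEq n (-t)
    have h3 : 1 - (t + 1) = -t := by ring
    rw [h3]
    have h4 : ee n (-t + 1) = 2 * (-t)^n - ee n (-t) := by linarith
    have h5 : ee n (1 - t) = ee n (-t + 1) := by ring_nf
    rw [h5, h4]
    have : ((-1:ℝ))^n * (-t)^n = t^n := by
      rw [← mul_pow]; ring_nf
    nlinarith [this, h1]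
  -- H eval at even naturals equals H.eval 0
  have hper : ∀ t : ℝ, H.eval (t + 2) = H.eval t := by
    intro t
    have k1 := key t
    have k2 := key (t + 1)
    have : t + 1 + 1 = t + 2 := by ring
    rw [this] at k2
    linarith
  have heven : ∀ k : ℕ, H.eval ((2 * k : ℕ) : ℝ) = H.eval 0 := by
    intro k
    induction k with
    | zero => norm_num
    | succ m ihm =>
      have : ((2 * (m+1) : ℕ) : ℝ) = (2 * m : ℕ) + 2 := by push_cast; ring
      rw [this, hper, ihm]
  have hG : H - Polynomial.C (H.eval 0) = 0 := by
    apply Polynomial.eq_zero_of_infinite_isRoot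
    apply Set.infinite_of_injective_forall_mem
      (f := fun k : ℕ => ((2 * k : ℕ) : ℝ))
    · intro a b hab
      simp only at hab
      have : (2*a : ℕ) = (2*b : ℕ) := by exact_mod_cast hab
      omega
    · intro k
      have := heven k
      push_cast at this
      simp only [Polynomial.IsRoot, Set.mem_setOf_eq, Polynomial.eval_sub, Polynomial.eval_C]
      push_cast
      linarith
  have hHC : H = Polynomial.C (H.eval 0) := by
    have := sub_eq_zero.mp hG
    exact this
  have hc0 : H.eval 0 = 0 := by
    have := key 0
    rw [hHC] at this
    simp at this
    linarith [this]
  have hH0 : H = 0 := by rw [hHC, hc0]; simp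
  have hz := hHev x
  rw [hH0] at hz
  simp only [Polynomial.eval_zero] at hz
  have hsq : (-1:ℝ)^n * (-1:ℝ)^n = 1 := by rw [← mul_pow]; norm_num
  have h1 : ee n x = (-1:ℝ)^n * ee n (1 - x) := by linarith
  rw [h1, ← mul_assoc, hsq, one_mul]

lemma ee_odd (m : ℕ) (hm : Odd m) : ee m (1/2 : ℝ) = 0 := by
  have := ee_reflect m (1/2)
  rw [Odd.neg_one_pow hm] at this
  norm_num at this
  linarith

lemma eulerNumber_cast (m : ℕ) :
    ((eulerNumber m : ℚ) : ℝ) = 2 ^ m * ee m (1/2 : ℝ) := by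
  unfold eulerNumber ee
  push_cast
  congr 1
  have : ((1:ℝ)/2) = algebraMap ℚ ℝ (1/2 : ℚ) := by norm_num
  rw [this, Polynomial.aeval_algebraMap_apply]
  simp [Polynomial.coe_aeval_eq_eval]

open goldenRatio in
lemma lucas_real : ∀ m : ℕ, (lucas m : ℝ) = φ ^ m + ψ ^ m := by
  intro m
  induction m using Nat.twoStepInduction with
  | zero => norm_num [lucas]
  | one =>
    show ((1:ℕ):ℝ) = _
    rw [pow_one, pow_one, Real.goldenRatio_add_goldenConj]
    norm_num
  | more m ih1 ih2 =>
    have hg : φ ^ (m + 2) = φ ^ (m+1) + φ ^ m := by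
      have h : φ * φ = φ + 1 := by rw [← sq]; exact Real.goldenRatio_sq
      rw [pow_succ, pow_succ, mul_assoc, h]
      ring
    have hc : ψ ^ (m + 2) = ψ ^ (m+1) + ψ ^ m := by
      have h : ψ * ψ = ψ + 1 := by rw [← sq]; exact Real.goldenConj_sq
      rw [pow_succ, pow_succ, mul_assoc, h]
      ring
    show ((lucas (m+1) + lucas m : ℕ) : ℝ) = _
    push_cast
    rw [ih1, ih2, hg, hc]
    ring

lemma ee_scaled (n : ℕ) (c y : ℝ) (hc : c ≠ 0) :
    ∑ k ∈ range (n + 1), (n.choose k : ℝ) * ee k (1/2) * c ^ k * y ^ (n - k)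
      = c ^ n * ee n (1/2 + y / c) := by
  rw [ee_add n (1/2) (y / c), Finset.mul_sum]
  apply Finset.sum_congr rfl
  intro k hk
  rw [Finset.mem_range] at hk
  have hkn : k ≤ n := by omega
  have hcn : c ^ n = c ^ k * c ^ (n - k) := by
    rw [← pow_add]
    congr 1
    omega
  rw [div_pow, hcn]
  field_simp

open goldenRatio in
theorem stmt1 (n j : ℕ) (hj : 1 ≤ j) :
    ∑ k ∈ Finset.range (n / 2 + 1), (n.choose (2 * k) : ℝ) * (5 / 4 : ℝ) ^ k *
      (Nat.fib j : ℝ) ^ (2 * k) * (lucas (j * (n - 2 * k)) : ℝ) *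
      ((eulerNumber (2 * k) : ℚ) : ℝ) = (2 : ℝ) ^ ((1 : ℤ) - n) * (lucas j : ℝ) ^ n := by
  set a : ℝ := φ ^ j with ha
  set b : ℝ := ψ ^ j with hb
  have h5 : (0:ℝ) < √5 := Real.sqrt_pos.mpr (by norm_num)
  have hfib : (0:ℝ) < (Nat.fib j : ℝ) := by
    exact_mod_cast Nat.cast_pos.mpr (Nat.fib_pos.mpr hj)
  have hab : a - b = √5 * (Nat.fib j : ℝ) := by
    have := Real.coe_fib_eq j
    rw [ha, hb]
    rw [this, mul_div_cancel₀ _ (ne_of_gt h5)]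
  have habpos : 0 < a - b := by rw [hab]; positivity
  have habne : a - b ≠ 0 := ne_of_gt habpos
  have hsq5 : (√5) ^ 2 = 5 := Real.sq_sqrt (by norm_num)
  have habsq : (a - b) ^ 2 = 5 * (Nat.fib j : ℝ) ^ 2 := by
    rw [hab, mul_pow, hsq5]
  have hlm : ∀ m : ℕ, (lucas (j * m) : ℝ) = a ^ m + b ^ m := by
    intro m
    rw [lucas_real (j * m), ha, hb, ← pow_mul, ← pow_mul]
  have hLj : (lucas j : ℝ) = a + b := by
    have := hlm 1
    simpa using this
  set f : ℕ → ℝ := fun i => (n.choose i : ℝ) * ee i (1/2) * (a-b)^i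
      * (a^(n-i) + b^(n-i)) with hf
  have step1 : ∑ k ∈ Finset.range (n / 2 + 1), (n.choose (2 * k) : ℝ) * (5 / 4 : ℝ) ^ k *
      (Nat.fib j : ℝ) ^ (2 * k) * (lucas (j * (n - 2 * k)) : ℝ) *
      ((eulerNumber (2 * k) : ℚ) : ℝ)
      = ∑ k ∈ Finset.range (n / 2 + 1), f (2 * k) := by
    apply Finset.sum_congr rfl
    intro k _
    rw [eulerNumber_cast, hlm (n - 2*k), hf]
    simp only
    have hpow : (5/4 : ℝ)^k * (Nat.fib j : ℝ)^(2*k) * 2^(2*k) = (a-b)^(2*k) := by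
      rw [pow_mul, pow_mul, pow_mul, habsq]
      rw [← mul_pow, ← mul_pow]
      congr 1
      ring
    calc (n.choose (2*k) : ℝ) * (5/4:ℝ)^k * (Nat.fib j : ℝ)^(2*k) * (a^(n-2*k) + b^(n-2*k))
          * (2^(2*k) * ee (2*k) (1/2))
        = (n.choose (2*k) : ℝ) * ee (2*k) (1/2) * ((5/4:ℝ)^k * (Nat.fib j : ℝ)^(2*k) * 2^(2*k))
          * (a^(n-2*k) + b^(n-2*k)) := by ring
      _ = _ := by rw [hpow]
  have hodd : ∀ i, Odd i → f i = 0 := by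
    intro i hi
    have h0 := ee_odd i hi
    simp only [hf]
    rw [h0]
    ring
  have step2 : ∑ k ∈ Finset.range (n / 2 + 1), f (2 * k) = ∑ i ∈ Finset.range (n+1), f i := by
    have himg : ∑ i ∈ (Finset.range (n/2+1)).image (fun k => 2 * k), f i
        = ∑ k ∈ Finset.range (n/2+1), f (2 * k) := by
      apply Finset.sum_image
      intro x _ y _ h
      simp only at h
      omega
    rw [← himg]
    apply Finset.sum_subset
    · intro i hi
      simp only [Finset.mem_image, Finset.mem_range] at hi ⊢
      obtain ⟨k, hk, rfl⟩ := hi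
      omega
    · intro i hi hni
      simp only [Finset.mem_image, Finset.mem_range] at hi hni
      apply hodd
      rcases Nat.even_or_odd i with he | ho
      · exfalso
        obtain ⟨m, hm⟩ := he
        exact hni ⟨m, by omega, by omega⟩
      · exact ho
  set u : ℝ := 1/2 + b / (a - b) with hu
  have hu1 : 1/2 + a / (a - b) = u + 1 := by
    rw [hu]
    field_simp
    ring
  have step3 : ∑ i ∈ Finset.range (n+1), f i
      = (a-b)^n * ee n (1/2 + a/(a-b)) + (a-b)^n * ee n (1/2 + b/(a-b)) := by
    rw [← ee_scaled n (a-b) a habne, ← ee_scaled n (a-b) b habne, ← Finset.sum_add_distrib]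
    apply Finset.sum_congr rfl
    intro i _
    rw [hf]
    ring
  have step4 : (a-b)^n * ee n (1/2 + a/(a-b)) + (a-b)^n * ee n (1/2 + b/(a-b))
      = 2 * ((a+b)/2)^n := by
    rw [hu1]
    have := ee_funcEq n u
    have h2 : (a-b) * u = (a+b)/2 := by
      rw [hu]
      field_simp
      ring
    calc (a-b)^n * ee n (u+1) + (a-b)^n * ee n u = (a-b)^n * (2 * u^n) := by
          rw [← mul_add]
          congr 1
          linarith
      _ = 2 * ((a-b) * u)^n := by rw [mul_pow]; ring
      _ = 2 * ((a+b)/2)^n := by rw [h2]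
  have step5 : (2 : ℝ) ^ ((1 : ℤ) - n) * (lucas j : ℝ) ^ n = 2 * ((a+b)/2)^n := by
    rw [hLj, zpow_sub₀ (by norm_num : (2:ℝ) ≠ 0), zpow_one, zpow_natCast, div_pow]
    field_simp
  rw [step1, step2, step3, step4, step5]
end

section
/- For all n ≥ 1, ∑_{k=0}^{⌊n/2⌋} C(n,2k) 5^k F_{n-2k} B_{2k} = n L_{n-1} / 2, where F_m, L_m are Fibonacci and Lucas numbers and B_m are Bernoulli numbers. -/
section Aux
open Polynomial Finset Real

lemma gold_pow_rec (n : ℕ) : goldenRatio ^ (n+2) = goldenRatio^(n+1) + goldenRatio^n := by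
  calc goldenRatio^(n+2) = goldenRatio^n * goldenRatio^2 := by ring
    _ = goldenRatio^n * (goldenRatio + 1) := by rw [goldenRatio_sq]
    _ = goldenRatio^(n+1) + goldenRatio^n := by ring

lemma goldConj_pow_rec (n : ℕ) : goldenConj ^ (n+2) = goldenConj^(n+1) + goldenConj^n := by
  calc goldenConj^(n+2) = goldenConj^n * goldenConj^2 := by ring
    _ = goldenConj^n * (goldenConj + 1) := by rw [goldenConj_sq]
    _ = goldenConj^(n+1) + goldenConj^n := by ring

lemma lucas_real_s3 : ∀ n : ℕ, (lucas n : ℝ) = goldenRatio ^ n + goldenConj ^ n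
  | 0 => by norm_num [lucas]
  | 1 => by
      have := goldenRatio_add_goldenConj
      show ((1:ℕ) : ℝ) = _
      rw [pow_one, pow_one]
      push_cast
      linarith
  | n + 2 => by
      rw [lucas, Nat.cast_add, lucas_real_s3 (n+1), lucas_real_s3 n, gold_pow_rec, goldConj_pow_rec]
      ring

lemma bern_comp (n : ℕ) : (Polynomial.bernoulli n).comp (1 + X) =
    Polynomial.bernoulli n + C (n:ℚ) * X^(n-1) := by
  apply Polynomial.funext
  intro x
  simp [eval_comp, Polynomial.bernoulli_eval_one_add]

lemma bern_real_eval_one_add (n : ℕ) (x : ℝ) :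
    ((Polynomial.bernoulli n).map (algebraMap ℚ ℝ)).eval (1 + x)
      = ((Polynomial.bernoulli n).map (algebraMap ℚ ℝ)).eval x + n * x ^ (n-1) := by
  have h := congrArg (Polynomial.map (algebraMap ℚ ℝ)) (bern_comp n)
  rw [Polynomial.map_comp] at h
  have h2 := congrArg (Polynomial.eval x) h
  simpa [Polynomial.eval_comp] using h2

lemma bern_real_eval (n : ℕ) (x : ℝ) :
    ((Polynomial.bernoulli n).map (algebraMap ℚ ℝ)).eval x
      = ∑ i ∈ Finset.range (n+1), (bernoulli i : ℝ) * (n.choose i : ℝ) * x ^ (n - i) := by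
  rw [Polynomial.bernoulli, Polynomial.map_sum, Polynomial.eval_finset_sum]
  refine Finset.sum_congr rfl fun i _ => ?_
  rw [Polynomial.map_monomial, Polynomial.eval_monomial, eq_ratCast]
  push_cast
  ring

lemma sqrt5_ne : (Real.sqrt 5) ≠ 0 := by
  positivity

lemma hsum_eq (n : ℕ) (a : ℝ) :
    ∑ i ∈ Finset.range (n+1), (bernoulli i : ℝ) * (n.choose i : ℝ) * (Real.sqrt 5)^i * a^(n-i)
      = (Real.sqrt 5)^n * ((Polynomial.bernoulli n).map (algebraMap ℚ ℝ)).eval (a / Real.sqrt 5) := by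
  rw [bern_real_eval, Finset.mul_sum]
  refine Finset.sum_congr rfl fun i hi => ?_
  rw [Finset.mem_range] at hi
  have hi' : i ≤ n := by omega
  have hne : (Real.sqrt 5)^(n-i) ≠ 0 := pow_ne_zero _ sqrt5_ne
  have hpow : (Real.sqrt 5)^i * (Real.sqrt 5)^(n-i) = (Real.sqrt 5)^n := by
    rw [← pow_add]
    congr 1
    omega
  rw [div_pow]
  field_simp
  rw [← hpow]
  ring

lemma key (n : ℕ) (hn : 1 ≤ n) :
    ∑ i ∈ Finset.range (n+1), (bernoulli i : ℝ) * (n.choose i : ℝ) * (Real.sqrt 5)^i *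
        (goldenRatio^(n-i) - goldenConj^(n-i))
      = n * Real.sqrt 5 * goldenConj^(n-1) := by
  have hsub : ∑ i ∈ Finset.range (n+1), (bernoulli i : ℝ) * (n.choose i : ℝ) * (Real.sqrt 5)^i *
        (goldenRatio^(n-i) - goldenConj^(n-i))
      = (∑ i ∈ Finset.range (n+1), (bernoulli i : ℝ) * (n.choose i : ℝ) * (Real.sqrt 5)^i * goldenRatio^(n-i))
        - ∑ i ∈ Finset.range (n+1), (bernoulli i : ℝ) * (n.choose i : ℝ) * (Real.sqrt 5)^i * goldenConj^(n-i) := by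
    rw [← Finset.sum_sub_distrib]
    exact Finset.sum_congr rfl fun i _ => by ring
  rw [hsub, hsum_eq, hsum_eq]
  have hdiv : goldenRatio / Real.sqrt 5 = 1 + goldenConj / Real.sqrt 5 := by
    have h := goldenRatio_sub_goldenConj
    field_simp
    linarith
  rw [hdiv, bern_real_eval_one_add]
  have hpow : (Real.sqrt 5)^n = Real.sqrt 5 * (Real.sqrt 5)^(n-1) := by
    rw [← pow_succ']
    congr 1
    omega
  rw [div_pow, hpow]
  have hne : (Real.sqrt 5)^(n-1) ≠ 0 := pow_ne_zero _ sqrt5_ne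
  field_simp
  ring

lemma bern_odd_zero {j : ℕ} (h1 : ¬ Even j) (h2 : j ≠ 1) : _root_.bernoulli j = 0 := by
  rw [bernoulli_eq_bernoulli'_of_ne_one h2]
  refine bernoulli'_eq_zero_of_odd (Nat.not_even_iff_odd.mp h1) ?_
  rcases Nat.lt_or_ge j 2 with h | h
  · interval_cases j
    · simp at h1
    · simp at h2
  · omega

end Aux

theorem stmt3 (n : ℕ) (hn : 1 ≤ n) :
    ∑ k ∈ Finset.range (n / 2 + 1), (n.choose (2 * k) : ℚ) * 5 ^ k *
      (Nat.fib (n - 2 * k) : ℚ) * bernoulli (2 * k) = (n : ℚ) * (lucas (n - 1) : ℚ) / 2 := by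
  apply (Rat.cast_injective (α := ℝ))
  push_cast
  set s : ℝ := Real.sqrt 5 with hs
  set f : ℕ → ℝ := fun j => (_root_.bernoulli j : ℝ) * (n.choose j : ℝ) * s^j *
      (Real.goldenRatio^(n-j) - Real.goldenConj^(n-j)) with hf
  have hsq : s^2 = 5 := Real.sq_sqrt (by norm_num)
  have hLHS : ∑ k ∈ Finset.range (n / 2 + 1), (n.choose (2 * k) : ℝ) * 5 ^ k *
      (Nat.fib (n - 2 * k) : ℝ) * (_root_.bernoulli (2 * k) : ℝ)
      = (∑ k ∈ Finset.range (n / 2 + 1), f (2 * k)) / s := by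
    rw [Finset.sum_div]
    refine Finset.sum_congr rfl fun k _ => ?_
    rw [hf]
    simp only
    rw [Real.coe_fib_eq]
    have h5 : (5 : ℝ)^k = s^(2*k) := by
      rw [pow_mul, hsq]
    rw [h5]
    ring
  rw [hLHS]
  -- even/odd split
  have hsplit := Finset.sum_filter_add_sum_filter_not (Finset.range (n+1)) Even f
  have hoddsum : ∑ j ∈ (Finset.range (n+1)).filter (fun j => ¬ Even j), f j = f 1 := by
    apply Finset.sum_eq_single_of_mem
    · simp only [Finset.mem_filter, Finset.mem_range]
      constructor
      · omega
      · decide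
    · intro j hj hne
      simp only [Finset.mem_filter, Finset.mem_range] at hj
      have : _root_.bernoulli j = 0 := bern_odd_zero hj.2 hne
      simp [hf, this]
  have himg : (Finset.range (n+1)).filter Even = (Finset.range (n/2+1)).image (fun k => 2*k) := by
    ext j
    simp only [Finset.mem_filter, Finset.mem_range, Finset.mem_image, Nat.even_iff]
    constructor
    · rintro ⟨h1, h2⟩
      exact ⟨j/2, by omega, by omega⟩
    · rintro ⟨k, hk, rfl⟩
      omega
  have hev : ∑ k ∈ Finset.range (n/2+1), f (2*k) = ∑ j ∈ (Finset.range (n+1)).filter Even, f j := by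
    rw [himg, Finset.sum_image]
    intro k _ l _ h
    simp only at h
    omega
  have hfull : ∑ j ∈ Finset.range (n+1), f j = n * s * Real.goldenConj^(n-1) := key n hn
  have hf1 : f 1 = -(1/2) * n * s * (Real.goldenRatio^(n-1) - Real.goldenConj^(n-1)) := by
    rw [hf]
    simp only
    rw [bernoulli_one, Nat.choose_one_right]
    push_cast
    ring
  have heq : ∑ k ∈ Finset.range (n/2+1), f (2*k)
      = n * s * Real.goldenConj^(n-1) + (1/2) * n * s * (Real.goldenRatio^(n-1) - Real.goldenConj^(n-1)) := by
    rw [hev]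
    have : ∑ j ∈ (Finset.range (n+1)).filter Even, f j
        = ∑ j ∈ Finset.range (n+1), f j - ∑ j ∈ (Finset.range (n+1)).filter (fun j => ¬ Even j), f j := by
      rw [← hsplit]; ring
    rw [this, hoddsum, hfull, hf1]
    ring
  rw [heq, lucas_real_s3]
  have hs0 : s ≠ 0 := sqrt5_ne
  field_simp
  ring
end

section
/- For every even integer s ≥ 2 and all n ≥ 0, the balancing polynomial satisfies B*_n(L_s/6) = F_{sn}/F_s and the Lucas-balancing polynomial satisfies C_n(L_s/6) = L_{sn}/2, where F_m, L_m are Fibonacci and Lucas numbers. -/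
noncomputable def balancingPolyR (x : ℝ) : ℕ → ℝ
  | 0 => 0
  | 1 => 1
  | n + 2 => 6 * x * balancingPolyR x (n + 1) - balancingPolyR x n

noncomputable def lucasBalancingPolyR (x : ℝ) : ℕ → ℝ
  | 0 => 1
  | 1 => 3 * x
  | n + 2 => 6 * x * lucasBalancingPolyR x (n + 1) - lucasBalancingPolyR x n

lemma lucas_eq_fib (n : ℕ) : (lucas n : ℤ) = 2 * Nat.fib (n + 1) - Nat.fib n := by
  induction n using Nat.twoStepInduction with
  | zero => simp [lucas]
  | one => simp [lucas, Nat.fib_add_two]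
  | more n ih1 ih2 =>
    have h := Nat.fib_add_two (n := n)
    have h2 := Nat.fib_add_two (n := n + 1)
    show ((lucas (n+1) + lucas n : ℕ) : ℤ) = _
    push_cast [h, h2] at *
    linarith

lemma cassini (n : ℕ) :
    (Nat.fib (n + 1) : ℤ) ^ 2 - Nat.fib (n + 1) * Nat.fib n - (Nat.fib n : ℤ) ^ 2
      = (-1) ^ n := by
  induction n with
  | zero => simp
  | succ n ih =>
    have h := Nat.fib_add_two (n := n)
    push_cast [h] at *
    ring_nf
    ring_nf at ih
    linarith [ih]

lemma key_fib (s : ℕ) (h1 : 1 ≤ s)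
    (hc : (Nat.fib (s + 1) : ℤ) ^ 2 - Nat.fib (s + 1) * Nat.fib s - (Nat.fib s : ℤ) ^ 2 = 1) :
    ∀ m, (Nat.fib (m + 2 * s) : ℤ) + Nat.fib m = lucas s * Nat.fib (m + s) := by
  have hL := lucas_eq_fib s
  have base0 : (Nat.fib (2 * s) : ℤ) = lucas s * Nat.fib s := by
    obtain ⟨k, rfl⟩ : ∃ k, s = k + 1 := ⟨s - 1, by omega⟩
    have h := Nat.fib_add (k + 1) k
    have he : k + 1 + k + 1 = 2 * (k + 1) := by omega
    rw [he] at h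
    have h2 := Nat.fib_add_two (n := k)
    rw [lucas_eq_fib]
    push_cast [h, h2]
    ring
  have base1 : (Nat.fib (1 + 2 * s) : ℤ) + Nat.fib 1 = lucas s * Nat.fib (1 + s) := by
    have h := Nat.fib_add s s
    have he : s + s + 1 = 1 + 2 * s := by omega
    rw [he] at h
    have hone : (1:ℕ) + s = s + 1 := by omega
    rw [hone, hL]
    push_cast [h, Nat.fib_one]
    nlinarith [hc]
  intro m
  induction m using Nat.twoStepInduction with
  | zero => simpa using base0
  | one => simpa using base1
  | more m ih1 ih2 =>
    have f1 : (Nat.fib (m + 2 + 2 * s) : ℤ) = Nat.fib (m + 1 + 2 * s) + Nat.fib (m + 2 * s) := by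
      have h := Nat.fib_add_two (n := m + 2 * s)
      have : m + 2 * s + 2 = m + 2 + 2 * s := by omega
      rw [this] at h
      have : m + 2 * s + 1 = m + 1 + 2 * s := by omega
      rw [this] at h
      push_cast [h]; ring
    have f2 : (Nat.fib (m + 2 + s) : ℤ) = Nat.fib (m + 1 + s) + Nat.fib (m + s) := by
      have h := Nat.fib_add_two (n := m + s)
      have : m + s + 2 = m + 2 + s := by omega
      rw [this] at h
      have : m + s + 1 = m + 1 + s := by omega
      rw [this] at h
      push_cast [h]; ring
    have f3 : (Nat.fib (m + 2) : ℤ) = Nat.fib (m + 1) + Nat.fib m := by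
      push_cast [Nat.fib_add_two]; ring
    rw [f1, f2, f3]
    linarith [ih1, ih2]

lemma key_lucas (s : ℕ) (h1 : 1 ≤ s)
    (hc : (Nat.fib (s + 1) : ℤ) ^ 2 - Nat.fib (s + 1) * Nat.fib s - (Nat.fib s : ℤ) ^ 2 = 1) :
    ∀ m, (lucas (m + 2 * s) : ℤ) + lucas m = lucas s * lucas (m + s) := by
  have kf := key_fib s h1 hc
  intro m
  induction m using Nat.twoStepInduction with
  | zero =>
    have h0 := kf 0
    have h1' := kf 1
    simp only [Nat.zero_add, zero_add, Nat.fib_zero, Nat.fib_one, Nat.cast_one,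
      Nat.cast_zero, add_zero] at h0 h1' ⊢
    have hA : 1 + 2 * s = 2 * s + 1 := by omega
    have hB : 1 + s = s + 1 := by omega
    rw [hA, hB] at h1'
    have l0 : (lucas 0 : ℤ) = 2 := rfl
    rw [lucas_eq_fib (2 * s), l0, lucas_eq_fib s] at *
    linear_combination 2 * h1' - h0
  | one =>
    have h1' := kf 1
    have h2' := kf 2
    simp only [Nat.fib_one, Nat.cast_one] at h1'
    have hf2 : (Nat.fib 2 : ℤ) = 1 := rfl
    rw [hf2] at h2'
    have hA : 1 + 2 * s = 2 * s + 1 := by omega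
    have hB : 1 + s = s + 1 := by omega
    have hC : 2 + 2 * s = 2 * s + 2 := by omega
    have hD : 2 + s = s + 2 := by omega
    rw [hA, hB] at h1' ⊢
    rw [hC, hD] at h2'
    have l1 : (lucas 1 : ℤ) = 1 := rfl
    rw [lucas_eq_fib (2 * s + 1), lucas_eq_fib (s + 1), lucas_eq_fib s, l1]
    have e1 : 2 * s + 1 + 1 = 2 * s + 2 := rfl
    have e2 : s + 1 + 1 = s + 2 := rfl
    rw [e1, e2]
    rw [lucas_eq_fib s] at h1' h2'
    linear_combination 2 * h2' - h1'
  | more m ih1 ih2 =>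
    have f1 : (lucas (m + 2 + 2 * s) : ℤ) = lucas (m + 1 + 2 * s) + lucas (m + 2 * s) := by
      have : m + 2 + 2 * s = (m + 2 * s) + 2 := by omega
      rw [this]
      show ((lucas (m + 2*s + 1) + lucas (m + 2*s) : ℕ) : ℤ) = _
      push_cast
      have : m + 2 * s + 1 = m + 1 + 2 * s := by omega
      rw [this]
    have f2 : (lucas (m + 2 + s) : ℤ) = lucas (m + 1 + s) + lucas (m + s) := by
      have : m + 2 + s = (m + s) + 2 := by omega
      rw [this]
      show ((lucas (m + s + 1) + lucas (m + s) : ℕ) : ℤ) = _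
      push_cast
      have : m + s + 1 = m + 1 + s := by omega
      rw [this]
    have f3 : (lucas (m + 2) : ℤ) = lucas (m + 1) + lucas m := by
      show ((lucas (m + 1) + lucas m : ℕ) : ℤ) = _
      push_cast; ring
    rw [f1, f2, f3]
    linarith [ih1, ih2]

theorem stmt8 (s : ℕ) (hs : 2 ≤ s) (hse : Even s) (n : ℕ) :
    balancingPolyR ((lucas s : ℝ) / 6) n = (Nat.fib (s * n) : ℝ) / (Nat.fib s : ℝ) ∧
    lucasBalancingPolyR ((lucas s : ℝ) / 6) n = (lucas (s * n) : ℝ) / 2 := by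
  have hfs : (0:ℝ) < (Nat.fib s : ℝ) := by
    exact_mod_cast Nat.fib_pos.mpr (by omega)
  have hfs' : (Nat.fib s : ℝ) ≠ 0 := ne_of_gt hfs
  have hc : (Nat.fib (s + 1) : ℤ) ^ 2 - Nat.fib (s + 1) * Nat.fib s - (Nat.fib s : ℤ) ^ 2 = 1 := by
    rw [cassini s, hse.neg_one_pow]
  have kf := key_fib s (by omega) hc
  have kl := key_lucas s (by omega) hc
  induction n using Nat.twoStepInduction with
  | zero => simp [balancingPolyR, lucasBalancingPolyR, lucas]
  | one =>
    constructor
    · simp [balancingPolyR, Nat.mul_one, div_self hfs']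
    · simp [lucasBalancingPolyR]; ring
  | more n ih1 ih2 =>
    obtain ⟨ihb1, ihc1⟩ := ih1
    obtain ⟨ihb2, ihc2⟩ := ih2
    have kfn : (Nat.fib (s * n + 2 * s) : ℝ) + Nat.fib (s * n) = lucas s * Nat.fib (s * n + s) := by
      exact_mod_cast congrArg (Int.cast : ℤ → ℝ) (kf (s * n))
    have kln : (lucas (s * n + 2 * s) : ℝ) + lucas (s * n) = lucas s * lucas (s * n + s) := by
      exact_mod_cast congrArg (Int.cast : ℤ → ℝ) (kl (s * n))
    have e2 : s * (n + 2) = s * n + 2 * s := by ring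
    have e1 : s * (n + 1) = s * n + s := by ring
    constructor
    · show 6 * ((lucas s : ℝ)/6) * balancingPolyR _ (n+1) - balancingPolyR _ n = _
      rw [ihb2, ihb1, e2, e1]
      field_simp
      linarith [kfn]
    · show 6 * ((lucas s : ℝ)/6) * lucasBalancingPolyR _ (n+1) - lucasBalancingPolyR _ n = _
      rw [ihc2, ihc1, e2, e1]
      field_simp
      linarith [kln]
end

section
/- For all n ≥ 1 and all complex x, ∑_{k=1}^{⌊n/2⌋} C(n-1, 2k-1) C_{2(n-2k)}(x) (144x²(9x²-1))^k E_{2k-1}(0) = 12x(1-9x²) B*_{2n-2}(x), where C_m(x) and B*_m(x) are Lucas-balancing and balancing polynomials and E_m(x) are Euler polynomials. -/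
noncomputable def balancingPoly (x : ℂ) : ℕ → ℂ
  | 0 => 0
  | 1 => 1
  | n + 2 => 6 * x * balancingPoly x (n + 1) - balancingPoly x n

noncomputable def lucasBalancingPoly (x : ℂ) : ℕ → ℂ
  | 0 => 1
  | 1 => 3 * x
  | n + 2 => 6 * x * lucasBalancingPoly x (n + 1) - lucasBalancingPoly x n

lemma euler_rec (t : ℕ) :
    (∑ m ∈ Finset.range (t+1), (t.choose m : ℚ) * (eulerPoly m).eval 0) + (eulerPoly t).eval 0
      = 2 * (if t = 0 then 1 else 0) := by
  have h : (eulerPoly t).eval 0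
      = (0:ℚ)^t - (1/2) * ∑ m ∈ Finset.range t, (t.choose m : ℚ) * (eulerPoly m).eval 0 := by
    rw [eulerPoly]
    simp only [Polynomial.eval_sub, Polynomial.eval_pow, Polynomial.eval_X, Polynomial.eval_mul,
      Polynomial.eval_C, Polynomial.eval_finset_sum, Polynomial.eval_smul, smul_eq_mul]
    rw [Fin.sum_univ_eq_sum_range (fun m => (t.choose m : ℚ) * (eulerPoly m).eval 0)]
  rw [Finset.sum_range_succ, Nat.choose_self]
  rw [h]
  rcases eq_or_ne t 0 with rfl | ht
  · norm_num
  · rw [if_neg ht, zero_pow ht]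
    ring

noncomputable def ec (m : ℕ) : ℂ := ((eulerPoly m).eval 0 : ℚ)

lemma euler_recC (t : ℕ) :
    (∑ m ∈ Finset.range (t+1), (t.choose m : ℂ) * ec m) + ec t
      = 2 * (if t = 0 then 1 else 0) := by
  have h := congrArg (fun q : ℚ => (q : ℂ)) (euler_rec t)
  push_cast at h
  simpa [ec, apply_ite (fun q : ℚ => (q : ℂ))] using h

lemma triangle_comm {M : Type*} [AddCommMonoid M] (n : ℕ) (f : ℕ → ℕ → M) :
    ∑ m ∈ Finset.range n, ∑ j ∈ Finset.range (n - m), f m j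
      = ∑ j ∈ Finset.range n, ∑ m ∈ Finset.range (n - j), f m j := by
  rw [← Finset.sum_range_diag_flip n f, ← Finset.sum_range_diag_flip n (fun j m => f m j)]
  refine Finset.sum_congr rfl fun s _ => ?_
  rw [← Finset.sum_range_reflect (fun k => f k (s - k)) (s+1)]
  refine Finset.sum_congr rfl fun k hk => ?_
  have hk' : k ≤ s := Nat.lt_succ_iff.mp (Finset.mem_range.mp hk)
  congr 1
  omega

lemma tri {N m j : ℕ} (h : m + j ≤ N) :
    N.choose m * (N - m).choose j = N.choose j * (N - j).choose m := by
  have h1 := Nat.choose_mul (n := N) (Nat.le_add_right m j)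
  have h2 := Nat.choose_mul (n := N) (Nat.le_add_left j m)
  rw [Nat.choose_symm_add] at h1
  simp only [Nat.add_sub_cancel_left, Nat.add_sub_cancel] at h1 h2
  omega

lemma keyL (N : ℕ) (b d : ℂ) :
    ∑ m ∈ Finset.range (N+1), (N.choose m : ℂ) * ec m * d^m * ((b+d)^(N-m) + b^(N-m))
      = 2 * b^N := by
  have step1 : ∑ m ∈ Finset.range (N+1), (N.choose m : ℂ) * ec m * d^m * ((b+d)^(N-m) + b^(N-m))
      = (∑ m ∈ Finset.range (N+1), ∑ j ∈ Finset.range (N+1-m),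
            (N.choose j : ℂ) * ((N-j).choose m : ℂ) * ec m * b^j * d^(N-j))
        + ∑ m ∈ Finset.range (N+1), (N.choose m : ℂ) * ec m * d^m * b^(N-m) := by
    rw [← Finset.sum_add_distrib]
    refine Finset.sum_congr rfl fun m hm => ?_
    have hm' : m ≤ N := Nat.lt_succ_iff.mp (Finset.mem_range.mp hm)
    rw [mul_add]
    congr 1
    rw [add_pow, Finset.mul_sum]
    have hr : N + 1 - m = (N - m) + 1 := by omega
    rw [hr]
    refine Finset.sum_congr rfl fun j hj => ?_
    have hj' : j ≤ N - m := Nat.lt_succ_iff.mp (Finset.mem_range.mp hj)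
    have htri : (N.choose m) * ((N-m).choose j) = (N.choose j) * ((N-j).choose m) :=
      tri (by omega)
    have hd : m + (N - m - j) = N - j := by omega
    calc (N.choose m : ℂ) * ec m * d^m * (b^j * d^(N-m-j) * ((N-m).choose j : ℂ))
        = ((N.choose m : ℂ) * ((N-m).choose j : ℂ)) * ec m * b^j * (d^m * d^(N-m-j)) := by
          ring
      _ = (N.choose j : ℂ) * ((N-j).choose m : ℂ) * ec m * b^j * d^(N-j) := by
          rw [← pow_add, hd, ← Nat.cast_mul, htri, Nat.cast_mul]
  rw [step1, triangle_comm]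
  rw [← Finset.sum_range_reflect (fun m => (N.choose m : ℂ) * ec m * d^m * b^(N-m)) (N+1)]
  rw [← Finset.sum_add_distrib]
  have step2 : ∀ j ∈ Finset.range (N+1),
      (∑ m ∈ Finset.range (N+1-j),
          (N.choose j : ℂ) * ((N-j).choose m : ℂ) * ec m * b^j * d^(N-j))
        + (N.choose (N+1-1-j) : ℂ) * ec (N+1-1-j) * d^(N+1-1-j) * b^(N-(N+1-1-j))
      = (N.choose j : ℂ) * b^j * d^(N-j) * (2 * (if N - j = 0 then 1 else 0)) := by
    intro j hj
    have hj' : j ≤ N := Nat.lt_succ_iff.mp (Finset.mem_range.mp hj)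
    have h1 : N + 1 - 1 - j = N - j := by omega
    have h2 : N - (N - j) = j := by omega
    rw [h1, h2, Nat.choose_symm hj']
    rw [← euler_recC (N - j)]
    have h3 : N + 1 - j = (N - j) + 1 := by omega
    rw [h3, mul_add, Finset.mul_sum]
    congr 1
    · refine Finset.sum_congr rfl fun m _ => ?_
      ring
    · ring
  rw [Finset.sum_congr rfl step2]
  rw [Finset.sum_eq_single_of_mem N (Finset.self_mem_range_succ N)]
  · simp [mul_comm]
  · intro j hj hne
    have hne' : N - j ≠ 0 := by
      have := Nat.lt_succ_iff.mp (Finset.mem_range.mp hj); omega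
    simp [hne']
lemma binetC (x w : ℂ) (hw : w^2 = 9*x^2 - 1) (n : ℕ) :
    2 * lucasBalancingPoly x n = (3*x+w)^n + (3*x-w)^n := by
  suffices h : ∀ m : ℕ, 2 * lucasBalancingPoly x m = (3*x+w)^m + (3*x-w)^m ∧
      2 * lucasBalancingPoly x (m+1) = (3*x+w)^(m+1) + (3*x-w)^(m+1) from (h n).1
  intro m
  induction m with
  | zero => exact ⟨by norm_num [lucasBalancingPoly], by simp [lucasBalancingPoly]; ring⟩
  | succ m ih =>
    refine ⟨ih.2, ?_⟩
    show 2 * lucasBalancingPoly x (m+2) = _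
    rw [lucasBalancingPoly]
    linear_combination 6*x*ih.2 - ih.1 - ((3*x+w)^m + (3*x-w)^m) * hw

lemma binetB (x w : ℂ) (hw : w^2 = 9*x^2 - 1) (n : ℕ) :
    (3*x+w)^n - (3*x-w)^n = 2 * w * balancingPoly x n := by
  suffices h : ∀ m : ℕ, ((3*x+w)^m - (3*x-w)^m = 2 * w * balancingPoly x m) ∧
      ((3*x+w)^(m+1) - (3*x-w)^(m+1) = 2 * w * balancingPoly x (m+1)) from (h n).1
  intro m
  induction m with
  | zero => exact ⟨by norm_num [balancingPoly], by simp [balancingPoly]; ring⟩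
  | succ m ih =>
    refine ⟨ih.2, ?_⟩
    show _ = 2 * w * balancingPoly x (m+2)
    rw [balancingPoly]
    linear_combination 6*x*ih.2 - ih.1 + ((3*x+w)^m - (3*x-w)^m) * hw
lemma oddsum (N : ℕ) (b d : ℂ) :
    2 * ∑ k ∈ Finset.Icc 1 ((N+1)/2), (N.choose (2*k-1) : ℂ) * ec (2*k-1) * d^(2*k-1) *
        ((b+d)^(N-(2*k-1)) + b^(N-(2*k-1)))
      = 2 * b^N - 2 * (b+d)^N := by
  have h1 := keyL N b d
  have h2 := keyL N (b+d) (-d)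
  have hb : b + d + -d = b := by ring
  rw [hb] at h2
  have hdiff : ∑ m ∈ Finset.range (N+1),
      ((N.choose m : ℂ) * ec m * d^m * ((b+d)^(N-m) + b^(N-m))
        - (N.choose m : ℂ) * ec m * (-d)^m * (b^(N-m) + (b+d)^(N-m)))
      = 2 * b^N - 2 * (b+d)^N := by
    rw [Finset.sum_sub_distrib, h1, h2]
  rw [← hdiff]
  rw [← Finset.sum_filter_of_ne (p := fun m => Odd m)
    (f := fun m => (N.choose m : ℂ) * ec m * d^m * ((b+d)^(N-m) + b^(N-m))
        - (N.choose m : ℂ) * ec m * (-d)^m * (b^(N-m) + (b+d)^(N-m)))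
    (s := Finset.range (N+1)) ?_]
  · rw [Finset.mul_sum]
    refine Finset.sum_nbij' (i := fun k => 2*k-1) (j := fun m => (m+1)/2) ?_ ?_ ?_ ?_ ?_
    · intro k hk
      obtain ⟨hk1, hk2⟩ := Finset.mem_Icc.mp hk
      simp only [Finset.mem_filter, Finset.mem_range]
      exact ⟨by omega, ⟨k-1, by omega⟩⟩
    · intro m hm
      obtain ⟨hm1, hm2⟩ := Finset.mem_filter.mp hm
      obtain ⟨t, ht⟩ := hm2
      rw [Finset.mem_range] at hm1
      rw [Finset.mem_Icc]
      omega
    · intro k hk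
      obtain ⟨hk1, hk2⟩ := Finset.mem_Icc.mp hk
      omega
    · intro m hm
      obtain ⟨_, t, ht⟩ := Finset.mem_filter.mp hm
      omega
    · intro k hk
      obtain ⟨hk1, hk2⟩ := Finset.mem_Icc.mp hk
      have hodd : Odd (2*k-1) := ⟨k-1, by omega⟩
      rw [hodd.neg_pow]
      ring
  · intro m hm hne
    rcases Nat.even_or_odd m with he | ho
    · exfalso
      apply hne
      rw [he.neg_pow]
      ring
    · exact ho
theorem stmt10 (n : ℕ) (hn : 1 ≤ n) (x : ℂ) :
    ∑ k ∈ Finset.Icc 1 (n / 2), ((n - 1).choose (2 * k - 1) : ℂ) *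
      lucasBalancingPoly x (2 * (n - 2 * k)) * (144 * x ^ 2 * (9 * x ^ 2 - 1)) ^ k *
      (((eulerPoly (2 * k - 1)).eval 0 : ℚ) : ℂ)
      = 12 * x * (1 - 9 * x ^ 2) * balancingPoly x (2 * n - 2) := by
  obtain ⟨w, hw⟩ := IsAlgClosed.exists_pow_nat_eq (9 * x ^ 2 - 1 : ℂ) (n := 2) (by norm_num)
  set a : ℂ := (3*x+w)^2 with ha
  set b : ℂ := (3*x-w)^2 with hb
  set d : ℂ := 12*x*w with hd
  have hba : b + d = a := by rw [ha, hb, hd]; ring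
  have key := oddsum (n-1) b d
  have hNn : n - 1 + 1 = n := by omega
  rw [hNn] at key
  have hstep : ∑ k ∈ Finset.Icc 1 (n / 2), ((n - 1).choose (2 * k - 1) : ℂ) *
      lucasBalancingPoly x (2 * (n - 2 * k)) * (144 * x ^ 2 * (9 * x ^ 2 - 1)) ^ k *
      (((eulerPoly (2 * k - 1)).eval 0 : ℚ) : ℂ)
      = (d/2) * ∑ k ∈ Finset.Icc 1 (n/2), ((n-1).choose (2*k-1) : ℂ) * ec (2*k-1) *
          d^(2*k-1) * ((b+d)^(n-1-(2*k-1)) + b^(n-1-(2*k-1))) := by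
    rw [Finset.mul_sum]
    refine Finset.sum_congr rfl fun k hk => ?_
    obtain ⟨hk1, hk2⟩ := Finset.mem_Icc.mp hk
    have h2k : 2*k ≤ n := by omega
    have e1 : n - 1 - (2*k-1) = n - 2*k := by omega
    have hCm := binetC x w hw (2*(n-2*k))
    have hpa : (3*x+w)^(2*(n-2*k)) = a^(n-2*k) := by rw [ha, ← pow_mul, Nat.mul_comm]
    have hpb : (3*x-w)^(2*(n-2*k)) = b^(n-2*k) := by rw [hb, ← pow_mul, Nat.mul_comm]
    rw [hpa, hpb] at hCm
    have hP : (144 * x^2 * (9*x^2-1))^k = d^(2*k-1) * d := by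
      have hd2 : (144 * x^2 * (9*x^2-1)) = d^2 := by
        rw [hd]; linear_combination (-144*x^2)*hw
      rw [hd2, ← pow_succ, ← pow_mul]
      congr 1
      omega
    rw [hba, e1, hP]
    simp only [ec]
    linear_combination (((n-1).choose (2*k-1) : ℂ) *
      (((eulerPoly (2*k-1)).eval 0 : ℚ) : ℂ) * d^(2*k-1) * d / 2) * hCm
  rw [hstep]
  have hSum : ∑ k ∈ Finset.Icc 1 (n/2), ((n-1).choose (2*k-1) : ℂ) * ec (2*k-1) *
          d^(2*k-1) * ((b+d)^(n-1-(2*k-1)) + b^(n-1-(2*k-1)))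
      = b^(n-1) - (b+d)^(n-1) := by linear_combination key / 2
  rw [hSum, hba]
  have hBB := binetB x w hw (2*(n-1))
  rw [show (3*x+w)^(2*(n-1)) = a^(n-1) by rw [ha, ← pow_mul, Nat.mul_comm],
    show (3*x-w)^(2*(n-1)) = b^(n-1) by rw [hb, ← pow_mul, Nat.mul_comm],
    show 2*(n-1) = 2*n-2 by omega] at hBB
  rw [hd]
  linear_combination (-(6*x*w))*hBB + (-12*x*(balancingPoly x (2*n-2)))*hw
end

section
/- For all n ≥ 1 and j ≥ 1, ∑_{k=1}^{⌊n/2⌋} C(n-1, 2k-1) 5^{k-1} F_{2j}^{2k-1} L_{2j(n-2k)} E_{2k-1}(0) = -F_{2j(n-1)}, where E_m(x) is the m-th Euler polynomial. -/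
noncomputable def er (n : ℕ) : ℝ := ((eulerPoly n).eval 0 : ℚ)


lemma er_rec (n : ℕ) : er n = (if n = 0 then 1 else 0)
    - (1/2) * ∑ k ∈ Finset.range n, (n.choose k : ℝ) * er k := by
  rw [er, eulerPoly,
    Fin.sum_univ_eq_sum_range (fun k => (n.choose k : ℚ) • eulerPoly k)]
  simp only [Polynomial.eval_sub, Polynomial.eval_pow, Polynomial.eval_X,
    Polynomial.eval_mul, Polynomial.eval_C, Polynomial.eval_finset_sum,
    Polynomial.eval_smul, smul_eq_mul, zero_pow_eq]
  push_cast [er, apply_ite (Rat.cast : ℚ → ℝ)]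
  ring

lemma er_zero : er 0 = 1 := by simpa using er_rec 0

lemma sumB (n : ℕ) : ∑ k ∈ Finset.range (n+1), (n.choose k : ℝ) * er k
    = 2 * (if n = 0 then 1 else 0) - er n := by
  rw [Finset.sum_range_succ]
  have h := er_rec n
  simp only [Nat.choose_self, Nat.cast_one, one_mul]
  linarith

lemma tri_s11 (N : ℕ) (f : ℕ → ℕ → ℝ) :
    ∑ m ∈ Finset.range (N+1), ∑ r ∈ Finset.range (N+1-m), f m r
      = ∑ s ∈ Finset.range (N+1), ∑ m ∈ Finset.range (s+1), f m (s-m) := by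
  rw [Finset.sum_sigma', Finset.sum_sigma']
  refine Finset.sum_nbij' (fun x => ⟨x.1 + x.2, x.1⟩) (fun x => ⟨x.2, x.1 - x.2⟩)
    ?_ ?_ ?_ ?_ ?_ <;>
  simp only [Finset.mem_sigma, Finset.mem_range, Sigma.forall] <;>
  intro a b h
  · omega
  · omega
  · have : a + b - a = b := by omega
    simp [this]
  · have : b + (a - b) = a := by omega
    simp [this]
  · have : a + b - a = b := by omega
    simp [this]

lemma lemG (N : ℕ) (x b : ℝ) :
    ∑ m ∈ Finset.range (N+1), (N.choose m : ℝ) * er m * x^m * (x+b)^(N-m)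
      + ∑ m ∈ Finset.range (N+1), (N.choose m : ℝ) * er m * x^m * b^(N-m)
      = 2 * b^N := by
  have expand : ∀ m ∈ Finset.range (N+1),
      (N.choose m : ℝ) * er m * x^m * (x+b)^(N-m)
        = ∑ r ∈ Finset.range (N+1-m),
            (N.choose m : ℝ) * er m * x^m * (x^r * b^(N-m-r) * ((N-m).choose r : ℝ)) := by
    intro m hm
    rw [Finset.mem_range] at hm
    rw [add_pow, Finset.mul_sum]
    have : N + 1 - m = (N - m) + 1 := by omega
    rw [this]
  rw [Finset.sum_congr rfl expand, tri_s11]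
  have inner : ∀ s ∈ Finset.range (N+1),
      (∑ m ∈ Finset.range (s+1),
        (N.choose m : ℝ) * er m * x^m * (x^(s-m) * b^(N-m-(s-m)) * ((N-m).choose (s-m) : ℝ)))
      = (N.choose s : ℝ) * x^s * b^(N-s) * (2 * (if s = 0 then 1 else 0) - er s) := by
    intro s hs
    rw [Finset.mem_range] at hs
    rw [← sumB s, Finset.mul_sum]
    refine Finset.sum_congr rfl fun m hm => ?_
    rw [Finset.mem_range] at hm
    have hms : m ≤ s := by omega
    have hsN : s ≤ N := by omega
    have h1 : x^m * x^(s-m) = x^s := by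
      rw [← pow_add]; congr 1; omega
    have h2 : N - m - (s - m) = N - s := by omega
    have h3 : (N.choose m : ℝ) * ((N-m).choose (s-m) : ℝ) = (N.choose s : ℝ) * (s.choose m : ℝ) := by
      rw [← Nat.cast_mul, ← Nat.cast_mul, ← Nat.choose_mul (n := N) hms]
    calc (N.choose m : ℝ) * er m * x^m * (x^(s-m) * b^(N-m-(s-m)) * ((N-m).choose (s-m) : ℝ))
        = ((N.choose m : ℝ) * ((N-m).choose (s-m) : ℝ)) * er m * (x^m * x^(s-m)) * b^(N-m-(s-m)) := by ring
      _ = ((N.choose s : ℝ) * (s.choose m : ℝ)) * er m * x^s * b^(N-s) := by rw [h1, h2, h3]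
      _ = (N.choose s : ℝ) * x^s * b^(N-s) * ((s.choose m : ℝ) * er m) := by ring
  rw [Finset.sum_congr rfl inner]
  have split : ∑ s ∈ Finset.range (N+1),
      (N.choose s : ℝ) * x^s * b^(N-s) * (2 * (if s = 0 then 1 else 0) - er s)
      = (∑ s ∈ Finset.range (N+1),
          (N.choose s : ℝ) * x^s * b^(N-s) * (2 * (if s = 0 then 1 else 0)))
        - ∑ s ∈ Finset.range (N+1), (N.choose s : ℝ) * er s * x^s * b^(N-s) := by
    rw [← Finset.sum_sub_distrib]
    exact Finset.sum_congr rfl fun s _ => by ring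
  rw [split]
  have delta : ∑ s ∈ Finset.range (N+1),
      (N.choose s : ℝ) * x^s * b^(N-s) * (2 * (if s = 0 then 1 else 0)) = 2 * b^N := by
    rw [Finset.sum_eq_single_of_mem 0 (Finset.mem_range.mpr (by omega))]
    · simp [mul_comm]
    · intro s _ hs; simp [hs]
  rw [delta]
  ring
lemma sumD (N : ℕ) :
    (∑ m ∈ Finset.range (N+1), (N.choose m : ℝ) * er m * (-1)^m) + (-1)^N * er N = 2 := by
  have h := lemG N (-1) 1
  rw [neg_add_cancel] at h
  have h1 : ∑ m ∈ Finset.range (N+1), (N.choose m : ℝ) * er m * (-1)^m * (0:ℝ)^(N-m)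
      = (-1)^N * er N := by
    rw [Finset.sum_eq_single_of_mem N (Finset.mem_range.mpr (by omega))]
    · simp [Nat.sub_self]; ring
    · intro s hs hne
      rw [Finset.mem_range] at hs
      rw [zero_pow (by omega)]
      ring
  rw [h1] at h
  simp only [one_pow, mul_one] at h
  linarith

lemma er_parity : ∀ n : ℕ, er n + (-1)^n * er n = 2 * (if n = 0 then 1 else 0) := by
  intro n
  induction n using Nat.strong_induction_on with
  | _ n ih =>
    rcases Nat.eq_zero_or_pos n with h0 | hpos
    · subst h0; simp [er_zero]; norm_num
    · have hB := sumB n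
      have hD := sumD n
      have hsplit : ∑ k ∈ Finset.range (n+1), (n.choose k : ℝ) * (er k + (-1)^k * er k)
          = (∑ k ∈ Finset.range (n+1), (n.choose k : ℝ) * er k)
            + ∑ k ∈ Finset.range (n+1), (n.choose k : ℝ) * er k * (-1)^k := by
        rw [← Finset.sum_add_distrib]
        exact Finset.sum_congr rfl fun k _ => by ring
      have hval : ∑ k ∈ Finset.range (n+1), (n.choose k : ℝ) * (er k + (-1)^k * er k)
          = 2 + (er n + (-1)^n * er n) := by
        rw [Finset.sum_range_succ]
        have hrest : ∑ k ∈ Finset.range n, (n.choose k : ℝ) * (er k + (-1)^k * er k)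
            = 2 := by
          have : ∀ k ∈ Finset.range n, (n.choose k : ℝ) * (er k + (-1)^k * er k)
              = (n.choose k : ℝ) * (2 * (if k = 0 then 1 else 0)) := by
            intro k hk
            rw [ih k (Finset.mem_range.mp hk)]
          rw [Finset.sum_congr rfl this,
            Finset.sum_eq_single_of_mem 0 (Finset.mem_range.mpr hpos)]
          · simp
          · intro s _ hs; simp [hs]
        rw [hrest]
        simp
      rw [hsplit, hB] at hval
      rw [if_neg (by omega : n ≠ 0)] at hval ⊢
      linarith

lemma er_even_zero (n : ℕ) (hn : n ≠ 0) (he : Even n) : er n = 0 := by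
  have h := er_parity n
  rw [Even.neg_one_pow he, if_neg hn] at h
  linarith


open goldenRatio in
lemma lucas_binet_s11 : ∀ n : ℕ, (lucas n : ℝ) = φ ^ n + ψ ^ n := by
  intro n
  induction n using Nat.twoStepInduction with
  | zero => norm_num [lucas]
  | one => simp [lucas]
  | more n ih1 ih2 =>
    have h1 : Real.goldenRatio ^ (n+2) = Real.goldenRatio ^ (n+1) + Real.goldenRatio ^ n := by
      rw [pow_add, Real.goldenRatio_sq]; ring_nf
    have h2 : Real.goldenConj ^ (n+2) = Real.goldenConj ^ (n+1) + Real.goldenConj ^ n := by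
      rw [pow_add, Real.goldenConj_sq]; ring_nf
    rw [lucas]
    push_cast
    rw [ih1, ih2, h1, h2]
    ring

lemma key_s11 (N j : ℕ) :
    ∑ k ∈ Finset.Icc 1 ((N+1) / 2), (N.choose (2*k-1) : ℝ) * 5^(k-1) *
      (Nat.fib (2*j) : ℝ)^(2*k-1) * (lucas (2*j*(N+1-2*k)) : ℝ) * er (2*k-1)
      = -(Nat.fib (2*j*N) : ℝ) := by
  set α : ℝ := Real.goldenRatio ^ (2*j) with hα
  set β : ℝ := Real.goldenConj ^ (2*j) with hβ
  set x : ℝ := α - β with hxdef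
  have h5 : Real.sqrt 5 ≠ 0 := by positivity
  have hsq5 : Real.sqrt 5 ^ 2 = 5 := Real.sq_sqrt (by norm_num)
  have hx : x = Real.sqrt 5 * (Nat.fib (2*j) : ℝ) := by
    rw [hxdef, hα, hβ, Real.coe_fib_eq]
    field_simp
  have hlucas : ∀ m : ℕ, (lucas (2*j*m) : ℝ) = α^m + β^m := by
    intro m
    rw [lucas_binet_s11, hα, hβ, ← pow_mul, ← pow_mul]
  have hxβ : x + β = α := by rw [hxdef]; ring
  have hG := lemG N x β
  rw [hxβ] at hG
  -- combined sum
  set g : ℕ → ℝ := fun m => (N.choose m : ℝ) * er m * x^m * (α^(N-m) + β^(N-m)) with hg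
  have hcomb : ∑ m ∈ Finset.range (N+1), g m = 2 * β^N := by
    rw [← hG, ← Finset.sum_add_distrib]
    exact Finset.sum_congr rfl fun m _ => by rw [hg]; ring
  have heven : ∑ m ∈ (Finset.range (N+1)).filter (fun m => ¬ m % 2 = 1), g m
      = α^N + β^N := by
    rw [Finset.sum_eq_single_of_mem 0
      (Finset.mem_filter.mpr ⟨Finset.mem_range.mpr (by omega), by norm_num⟩)]
    · rw [hg]; simp [er_zero]
    · intro s hs hne
      rw [Finset.mem_filter, Finset.mem_range] at hs
      have : er s = 0 := er_even_zero s hne (Nat.even_iff.mpr (by omega))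
      rw [hg]; simp [this]
  have hodd : ∑ k ∈ Finset.Icc 1 ((N+1)/2), g (2*k-1)
      = ∑ m ∈ (Finset.range (N+1)).filter (fun m => m % 2 = 1), g m := by
    refine Finset.sum_nbij' (fun k => 2*k-1) (fun m => (m+1)/2) ?_ ?_ ?_ ?_
      (fun a ha => rfl)
    all_goals intro a ha
    all_goals simp only [Finset.mem_Icc, Finset.mem_filter, Finset.mem_range] at ha ⊢
    all_goals omega
  have hfib : Real.sqrt 5 * (Nat.fib (2*j*N) : ℝ) = α^N - β^N := by
    rw [Real.coe_fib_eq, hα, hβ, ← pow_mul, ← pow_mul]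
    field_simp
  refine mul_left_cancel₀ h5 ?_
  rw [Finset.mul_sum]
  have hterm : ∀ k ∈ Finset.Icc 1 ((N+1)/2),
      Real.sqrt 5 * ((N.choose (2*k-1) : ℝ) * 5^(k-1) *
        (Nat.fib (2*j) : ℝ)^(2*k-1) * (lucas (2*j*(N+1-2*k)) : ℝ) * er (2*k-1))
      = g (2*k-1) := by
    intro k hk
    rw [Finset.mem_Icc] at hk
    have h2k : 2*k ≤ N+1 := by omega
    have hNm : N - (2*k-1) = N+1-2*k := by omega
    have hxpow : x^(2*k-1) = 5^(k-1) * Real.sqrt 5 * (Nat.fib (2*j) : ℝ)^(2*k-1) := by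
      rw [hx, mul_pow]
      have he : 2*k-1 = 2*(k-1)+1 := by omega
      rw [he, pow_succ, pow_mul, hsq5]
    rw [hg]
    simp only [hNm, hlucas (N+1-2*k), hxpow]
    ring
  rw [Finset.sum_congr rfl hterm, hodd]
  have hsplit := Finset.sum_filter_add_sum_filter_not (Finset.range (N+1))
    (fun m => m % 2 = 1) g
  have : Real.sqrt 5 * -(Nat.fib (2*j*N) : ℝ) = -(α^N - β^N) := by
    rw [← hfib]; ring
  rw [this]
  linarith [hcomb, heven, hsplit]

theorem stmt11 (n j : ℕ) (hn : 1 ≤ n) (hj : 1 ≤ j) :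
    ∑ k ∈ Finset.Icc 1 (n / 2), ((n - 1).choose (2 * k - 1) : ℚ) * 5 ^ (k - 1) *
      (Nat.fib (2 * j) : ℚ) ^ (2 * k - 1) * (lucas (2 * j * (n - 2 * k)) : ℚ) *
      (eulerPoly (2 * k - 1)).eval 0
      = -(Nat.fib (2 * j * (n - 1)) : ℚ) := by
  obtain ⟨N, rfl⟩ : ∃ N, n = N + 1 := ⟨n - 1, by omega⟩
  have hkey := key_s11 N j
  have hred : ∀ k, N + 1 - 2*k = N + 1 - 2*k := fun _ => rfl
  refine (Rat.cast_injective (α := ℝ)) ?_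
  push_cast
  simp only [er] at hkey
  exact hkey
end

section
/- For all n ≥ 0 and all complex x, ∑_{k=0}^{⌊n/2⌋} C(n,2k) C_{2(n-2k)}(x) (36x²(9x²-1))^k E_{2k} = (18x² - 1)^n, where C_m(x) are Lucas-balancing polynomials and E_m are Euler numbers. -/
open Finset

lemma sum_even_extract {M : Type*} [AddCommMonoid M] (g : ℕ → M) (h : ∀ i, g (2*i+1) = 0) :
    ∀ m : ℕ, ∑ i ∈ range (m+1), g i = ∑ j ∈ range (m/2+1), g (2*j) := by
  intro m
  induction m using Nat.twoStepInduction with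
  | zero => simp
  | one =>
    rw [show (2:ℕ) = 1+1 from rfl, Finset.sum_range_succ]
    have := h 0
    norm_num at this ⊢
    simp [this]
  | more m ih _ =>
    rw [Finset.sum_range_succ, Finset.sum_range_succ, ih]
    have hd : (m+1+1)/2 = m/2 + 1 := by omega
    rw [hd, Finset.sum_range_succ]
    rcases Nat.even_or_odd m with ⟨a, ha⟩ | ⟨a, ha⟩
    · have h1 : m + 1 = 2*a+1 := by omega
      have h2 : m + 1 + 1 = 2*(m/2+1) := by omega
      rw [h1, h2, h a]
      simp [Finset.sum_range_succ]
    · have h1 : m + 1 = 2*(m/2+1) := by omega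
      have h2 : m + 1 + 1 = 2*(a+1)+1 := by omega
      rw [h1, h2, h (a+1)]
      simp [Finset.sum_range_succ]

lemma tri_s12 {M : Type*} [AddCommMonoid M] (F : ℕ → ℕ → M) :
    ∀ N : ℕ, ∑ k ∈ range (N+1), ∑ j ∈ range (N+1-k), F k j
      = ∑ t ∈ range (N+1), ∑ k ∈ range (t+1), F k (t-k) := by
  intro N
  induction N with
  | zero => simp
  | succ N ih =>
    have hL : ∑ k ∈ range (N+1+1), ∑ j ∈ range (N+1+1-k), F k j
        = (∑ k ∈ range (N+1), ∑ j ∈ range (N+1-k), F k j) + ∑ k ∈ range (N+1+1), F k (N+1-k) := by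
      rw [Finset.sum_range_succ (n := N+1)]
      have : ∀ k ∈ range (N+1), ∑ j ∈ range (N+1+1-k), F k j
          = (∑ j ∈ range (N+1-k), F k j) + F k (N+1-k) := by
        intro k hk
        have : N+1+1-k = (N+1-k)+1 := by have := Finset.mem_range.mp hk; omega
        rw [this, Finset.sum_range_succ]
      rw [Finset.sum_congr rfl this, Finset.sum_add_distrib]
      have h0 : N+1+1-(N+1) = 1 := by omega
      rw [h0]
      simp [Finset.sum_range_succ]
      abel
    rw [hL, ih, Finset.sum_range_succ (f := fun t => ∑ k ∈ range (t+1), F k (t-k)) (n := N+1)]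

lemma eulerNumber_rec (m : ℕ) :
    2 * eulerNumber m + ∑ k ∈ Finset.range m, (m.choose k : ℚ) * 2^(m-k) * eulerNumber k = 2 := by
  have h : ∀ k : ℕ, (eulerPoly k).eval 2⁻¹ = eulerNumber k / 2^k := by
    intro k; rw [eulerNumber]; norm_num
  have hm : eulerNumber m = 2^m * ((1/2:ℚ)^m - (1/2) *
      ∑ k ∈ Finset.range m, (m.choose k : ℚ) * (eulerNumber k / 2^k)) := by
    rw [eulerNumber, eulerPoly]
    simp [Polynomial.eval_finset_sum, h]
    exact Fin.sum_univ_eq_sum_range (fun k => ((m.choose k : ℚ) * (eulerNumber k / 2 ^ k))) m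
  have h2 : (2:ℚ)^m * (1/2)^m = 1 := by rw [← mul_pow]; norm_num
  have hs : ∀ k ∈ Finset.range m, (m.choose k : ℚ) * 2^(m-k) * eulerNumber k
      = 2^m * ((m.choose k : ℚ) * (eulerNumber k / 2^k)) := by
    intro k hk
    rw [pow_sub₀ (2:ℚ) (by norm_num) (le_of_lt (Finset.mem_range.mp hk))]
    field_simp
  rw [hm, Finset.sum_congr rfl hs, ← Finset.mul_sum]
  linear_combination (2:ℚ) * h2

lemma eulerI (m : ℕ) :
    ∑ k ∈ range (m+1), (m.choose k : ℚ) * (1 + (-1)^(m-k)) * eulerNumber k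
      = if m = 0 then 2 else 0 := by
  -- alternating binomial sum
  have h4 : ∑ j ∈ range (m+1), ((-1:ℚ))^j * (m.choose j) = if m = 0 then 1 else 0 := by
    have h := Int.alternating_sum_range_choose (n := m)
    have h' := congrArg (fun z : ℤ => (z : ℚ)) h
    push_cast at h'
    simpa using h'
  have h2 : ∑ j ∈ range (m+1), ((-1:ℚ))^(m-j) * (m.choose (m-j))
      = ∑ j ∈ range (m+1), ((-1:ℚ))^j * (m.choose j) := by
    have := Finset.sum_range_reflect (fun j => ((-1:ℚ))^j * (m.choose j)) (m+1)
    simpa using this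
  -- D' computation
  have hD' : ∑ j ∈ range (m+1), ∑ k ∈ range (j+1),
      (m.choose j : ℚ) * (j.choose k : ℚ) * (-1)^(m-j) * 2^(j-k) * eulerNumber k
      = ∑ k ∈ range (m+1), (m.choose k : ℚ) * eulerNumber k := by
    have hcong : ∀ j ∈ range (m+1), ∑ k ∈ range (j+1),
        (m.choose j : ℚ) * (j.choose k : ℚ) * (-1)^(m-j) * 2^(j-k) * eulerNumber k
        = ∑ k ∈ range (j+1), (fun a b => (m.choose (a+b) : ℚ) * ((a+b).choose a : ℚ) *
            (-1)^(m-(a+b)) * 2^((a+b)-a) * eulerNumber a) k (j - k) := by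
      intro j hj
      apply Finset.sum_congr rfl
      intro k hk
      have hkj : k ≤ j := by have := Finset.mem_range.mp hk; omega
      have hkj' : k + (j - k) = j := by omega
      simp only [hkj']
    rw [Finset.sum_congr rfl hcong, ← tri_s12 (fun a b => (m.choose (a+b) : ℚ) * ((a+b).choose a : ℚ) *
            (-1)^(m-(a+b)) * 2^((a+b)-a) * eulerNumber a) m]
    apply Finset.sum_congr rfl
    intro k hk
    have hkm : k ≤ m := by have := Finset.mem_range.mp hk; omega
    have hr : m+1-k = (m-k)+1 := by omega
    rw [hr]
    have hterm : ∀ b ∈ range ((m-k)+1),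
        (m.choose (k+b) : ℚ) * ((k+b).choose k : ℚ) * (-1)^(m-(k+b)) * 2^((k+b)-k) * eulerNumber k
        = (m.choose k : ℚ) * eulerNumber k * (2^b * (-1)^((m-k)-b) * ((m-k).choose b : ℚ)) := by
      intro b hb
      have hbm : b ≤ m - k := by have := Finset.mem_range.mp hb; omega
      have hch : m.choose (k+b) * (k+b).choose k = m.choose k * (m-k).choose b := by
        have h0 := Nat.choose_mul (n := m) (k := k+b) (s := k) (by omega)
        simpa using h0
      have h5 : (k+b) - k = b := by omega
      have h6 : m - (k+b) = (m-k) - b := by omega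
      rw [h5, h6]
      have hch' := congrArg (fun z : ℕ => (z : ℚ)) hch
      push_cast at hch'
      linear_combination ((-1:ℚ))^(m-k-b) * 2^b * eulerNumber k * hch'
    rw [Finset.sum_congr rfl hterm, ← Finset.mul_sum]
    have hap : ((2:ℚ) + (-1))^(m-k) = ∑ b ∈ range ((m-k)+1),
        (2:ℚ)^b * (-1)^((m-k)-b) * ((m-k).choose b : ℚ) := add_pow 2 (-1) (m-k)
    norm_num at hap
    rw [← hap, mul_one]
  -- key identity
  have key : ∑ j ∈ range (m+1), ((m.choose j : ℚ) * (-1)^(m-j) * eulerNumber j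
        + ∑ k ∈ range (j+1), (m.choose j : ℚ) * (j.choose k : ℚ) * (-1)^(m-j) * 2^(j-k) * eulerNumber k)
      = ∑ j ∈ range (m+1), (m.choose j : ℚ) * (-1)^(m-j) * 2 := by
    apply Finset.sum_congr rfl
    intro j _
    have hS : ((m.choose j : ℚ) * (-1)^(m-j)) * ∑ k ∈ range j, ((j.choose k : ℚ) * 2^(j-k) * eulerNumber k)
        = ∑ k ∈ range j, (m.choose j : ℚ) * (j.choose k : ℚ) * (-1)^(m-j) * 2^(j-k) * eulerNumber k := by
      rw [Finset.mul_sum]; apply Finset.sum_congr rfl; intros; ring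
    have hrec := eulerNumber_rec j
    rw [Finset.sum_range_succ, Nat.choose_self, Nat.sub_self]
    push_cast
    linear_combination ((m.choose j : ℚ) * (-1)^(m-j)) * hrec - hS
  rw [Finset.sum_add_distrib, hD'] at key
  -- rewrite RHS of key
  have hR : ∑ j ∈ range (m+1), (m.choose j : ℚ) * (-1)^(m-j) * 2
      = 2 * (if m = 0 then 1 else 0 : ℚ) := by
    rw [← h4, ← h2, Finset.mul_sum]
    apply Finset.sum_congr rfl
    intro j hj
    have hjm : j ≤ m := by have := Finset.mem_range.mp hj; omega
    rw [Nat.choose_symm hjm]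
    ring
  rw [hR] at key
  have hgoal : ∑ k ∈ range (m+1), (m.choose k : ℚ) * (1 + (-1)^(m-k)) * eulerNumber k
      = (∑ j ∈ range (m+1), (m.choose j : ℚ) * (-1)^(m-j) * eulerNumber j)
        + ∑ k ∈ range (m+1), (m.choose k : ℚ) * eulerNumber k := by
    rw [← Finset.sum_add_distrib]
    apply Finset.sum_congr rfl
    intros; ring
  rw [hgoal, key]
  split <;> norm_num

lemma eulerJ (t : ℕ) :
    ∑ k ∈ range (t+1), ((2*t).choose (2*k) : ℚ) * eulerNumber (2*k) = if t = 0 then 1 else 0 := by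
  have h0 := eulerI (2*t)
  have hg : ∀ i, ((2*t).choose (2*i+1) : ℚ) * (1 + (-1)^(2*t-(2*i+1))) * eulerNumber (2*i+1) = 0 := by
    intro i
    by_cases h : 2*i+1 ≤ 2*t
    · have he : 2*t-(2*i+1) = 2*(t-i-1)+1 := by omega
      rw [he, pow_succ, pow_mul]
      norm_num
    · have hc : (2*t).choose (2*i+1) = 0 := Nat.choose_eq_zero_of_lt (by omega)
      rw [hc]; norm_num
  have hext := sum_even_extract (fun k => ((2*t).choose k : ℚ) * (1 + (-1)^(2*t-k)) * eulerNumber k) hg (2*t)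
  rw [hext] at h0
  have ht2 : 2*t/2 = t := by omega
  rw [ht2] at h0
  have h2 : ∀ j ∈ range (t+1), ((2*t).choose (2*j) : ℚ) * (1 + (-1)^(2*t-2*j)) * eulerNumber (2*j)
      = 2 * (((2*t).choose (2*j) : ℚ) * eulerNumber (2*j)) := by
    intro j hj
    have hh : 2*t-2*j = 2*(t-j) := by omega
    rw [hh, pow_mul]
    norm_num
    ring
  rw [Finset.sum_congr rfl h2, ← Finset.mul_sum] at h0
  have hsplit : (if 2*t = 0 then (2:ℚ) else 0) = 2 * (if t = 0 then 1 else 0) := by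
    rcases Nat.eq_zero_or_pos t with h|h
    · simp [h]
    · have h1 : 2*t ≠ 0 := by omega
      have h2 : t ≠ 0 := by omega
      simp [h1, h2]
  rw [hsplit] at h0
  exact mul_left_cancel₀ (by norm_num) h0

lemma Lstep (x : ℂ) (k : ℕ) : lucasBalancingPoly x (k+2)
    = 6*x*lucasBalancingPoly x (k+1) - lucasBalancingPoly x k := by
  simp [lucasBalancingPoly]

lemma Drec (x : ℂ) (m : ℕ) : lucasBalancingPoly x (2*(m+2))
    = (36*x^2-2) * lucasBalancingPoly x (2*(m+1)) - lucasBalancingPoly x (2*m) := by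
  have e1 := Lstep x (2*m+2)
  have e2 := Lstep x (2*m+1)
  have e3 := Lstep x (2*m)
  have h1 : 2*(m+2) = 2*m+2+2 := by ring
  have h2 : 2*(m+1) = 2*m+2 := by ring
  rw [h1, h2]
  linear_combination e1 + 6*x*e2 + e3

lemma Dcf (x c : ℂ) (hc : c^2 = (18*x^2-1)^2 - 1) :
    ∀ m : ℕ, lucasBalancingPoly x (2*m)
      = (((18*x^2-1)+c)^m + ((18*x^2-1)-c)^m)/2 := by
  intro m
  induction m using Nat.twoStepInduction with
  | zero => simp [lucasBalancingPoly]
  | one =>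
    have : (2:ℕ) = 0 + 2 := rfl
    rw [mul_one, this, Lstep]
    simp [lucasBalancingPoly]
    ring
  | more m ih ih2 =>
    rw [Drec, ih2, ih]
    linear_combination -((((18*x^2-1)+c)^m + ((18*x^2-1)-c)^m)/2) * hc

lemma Bexp (c s : ℂ) (m : ℕ) :
    ((s+c)^m + (s-c)^m)/2
      = ∑ j ∈ range (m/2+1), (m.choose (2*j) : ℂ) * (c^2)^j * s^(m-2*j) := by
  have hg : ∀ i : ℕ, ((c^(2*i+1) + (-c)^(2*i+1))/2) * s^(m-(2*i+1)) * ((m.choose (2*i+1) : ℂ)) = 0 := by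
    intro i
    have : Odd (2*i+1) := ⟨i, by ring⟩
    rw [this.neg_pow]
    ring
  have hext := sum_even_extract
    (fun i => ((c^i + (-c)^i)/2) * s^(m-i) * ((m.choose i : ℂ))) hg m
  have hA := add_pow c s m
  have hB := add_pow (-c) s m
  have hL : ((s+c)^m + (s-c)^m)/2
      = ∑ i ∈ range (m+1), ((c^i + (-c)^i)/2) * s^(m-i) * ((m.choose i : ℂ)) := by
    have h1 : (s+c)^m = (c+s)^m := by ring_nf
    have h2 : (s-c)^m = (-c+s)^m := by ring_nf
    rw [h1, h2, hA, hB, ← Finset.sum_add_distrib, Finset.sum_div]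
    apply Finset.sum_congr rfl
    intros; ring
  rw [hL, hext]
  apply Finset.sum_congr rfl
  intro j hj
  have he : Even (2*j) := ⟨j, by ring⟩
  rw [he.neg_pow]
  rw [show c^(2*j) = (c^2)^j by rw [← pow_mul]]
  ring

theorem stmt12 (n : ℕ) (x : ℂ) :
    ∑ k ∈ Finset.range (n / 2 + 1), (n.choose (2 * k) : ℂ) *
      lucasBalancingPoly x (2 * (n - 2 * k)) * (36 * x ^ 2 * (9 * x ^ 2 - 1)) ^ k *
      ((eulerNumber (2 * k) : ℚ) : ℂ)
      = (18 * x ^ 2 - 1) ^ n := by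
  obtain ⟨c, hc⟩ := IsAlgClosed.exists_pow_nat_eq ((18*x^2-1)^2 - 1 : ℂ) two_pos
  set s : ℂ := 18*x^2-1 with hs
  set N := n / 2 with hN
  set F : ℕ → ℕ → ℂ := fun k j => (n.choose (2*k) : ℂ) * ((n-2*k).choose (2*j) : ℂ) *
      (c^2)^(k+j) * s^(n-2*k-2*j) * ((eulerNumber (2*k) : ℚ) : ℂ) with hF
  have step1 : ∑ k ∈ Finset.range (N + 1), (n.choose (2 * k) : ℂ) *
      lucasBalancingPoly x (2 * (n - 2 * k)) * (36 * x ^ 2 * (9 * x ^ 2 - 1)) ^ k *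
      ((eulerNumber (2 * k) : ℚ) : ℂ)
      = ∑ k ∈ range (N+1), ∑ j ∈ range (N+1-k), F k j := by
    apply Finset.sum_congr rfl
    intro k hk
    have hkN : k ≤ N := by have := Finset.mem_range.mp hk; omega
    rw [Dcf x c hc (n - 2*k), Bexp c s (n-2*k)]
    have hd : (n-2*k)/2 + 1 = N+1-k := by omega
    rw [hd, Finset.mul_sum, Finset.sum_mul, Finset.sum_mul]
    apply Finset.sum_congr rfl
    intro j hj
    have hw : (36 * x ^ 2 * (9 * x ^ 2 - 1)) = c^2 := by rw [hc]; ring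
    rw [hF, hw]
    simp only []
    rw [pow_add]
    ring
  rw [step1, tri_s12 F N]
  have step3 : ∀ t ∈ range (N+1), ∑ k ∈ range (t+1), F k (t-k)
      = (n.choose (2*t) : ℂ) * (c^2)^t * s^(n-2*t) *
        ((∑ k ∈ range (t+1), ((2*t).choose (2*k) : ℚ) * eulerNumber (2*k) : ℚ) : ℂ) := by
    intro t ht
    have htN : t ≤ N := by have := Finset.mem_range.mp ht; omega
    have h2t : 2*t ≤ n := by omega
    push_cast
    rw [Finset.mul_sum]
    apply Finset.sum_congr rfl
    intro k hk
    have hkt : k ≤ t := by have := Finset.mem_range.mp hk; omega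
    have hch : n.choose (2*t) * (2*t).choose (2*k) = n.choose (2*k) * (n-2*k).choose (2*t-2*k) :=
      Nat.choose_mul (n := n) (k := 2*t) (s := 2*k) (by omega)
    have hch' := congrArg (fun z : ℕ => (z : ℂ)) hch
    push_cast at hch'
    rw [hF]
    simp only []
    have h1 : k + (t - k) = t := by omega
    have h2 : n - 2*k - 2*(t-k) = n - 2*t := by omega
    have h3 : 2*(t-k) = 2*t-2*k := by omega
    rw [h1, h2, h3]
    linear_combination -((c^2)^t * s^(n-2*t) * ((eulerNumber (2*k) : ℚ) : ℂ)) * hch'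
  rw [Finset.sum_congr rfl step3]
  have step4 : ∀ t ∈ range (N+1), (n.choose (2*t) : ℂ) * (c^2)^t * s^(n-2*t) *
        ((∑ k ∈ range (t+1), ((2*t).choose (2*k) : ℚ) * eulerNumber (2*k) : ℚ) : ℂ)
      = if t = 0 then s^n else 0 := by
    intro t ht
    rw [eulerJ]
    rcases Nat.eq_zero_or_pos t with h|h
    · simp [h]
    · have : t ≠ 0 := by omega
      simp [this]
  rw [Finset.sum_congr rfl step4, Finset.sum_ite_eq' (range (N+1)) 0 (fun _ => s^n)]
  simp
end

section
/- For all n ≥ 0 and all complex x, ∑_{k=0}^{⌊n/2⌋} C(n,2k) C_{2(n-2k)}(x) (36x²(9x²-1))^k E_{2k} = ∑_{k=0}^{n} C(n,k) (C_{2k}(x) - √(9x²-1) B*_{2k}(x)) (6x√(9x²-1))^{n-k}, where B*_m(x), C_m(x) are balancing and Lucas-balancing polynomials and E_m are Euler numbers. -/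
open Finset Polynomial

noncomputable def ev (n : ℕ) (x : ℚ) : ℚ := (eulerPoly n).eval x

lemma ev_def (n : ℕ) (x : ℚ) :
    ev n x = x ^ n - (1/2) * ∑ k ∈ range n, (n.choose k : ℚ) * ev k x := by
  rw [ev, eulerPoly]
  simp [Fin.sum_univ_eq_sum_range (fun k => (n.choose k : ℚ) • eulerPoly k) n, ev,
    Polynomial.eval_finset_sum, mul_comm]

lemma ev_sum (n : ℕ) (x : ℚ) :
    ∑ k ∈ range (n+1), (n.choose k : ℚ) * ev k x = 2 * x ^ n - ev n x := by
  rw [Finset.sum_range_succ, Nat.choose_self]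
  have := ev_def n x
  push_cast
  linarith [this]


lemma tri_eq (n : ℕ) (t : ℚ) (g : ℕ → ℚ) :
    (∑ k ∈ range (n+1), ∑ j ∈ range (k+1), (n.choose k : ℚ) * (k.choose j) * g j * t^(k-j))
  = ∑ k ∈ range (n+1), ∑ j ∈ range (k+1), (n.choose k : ℚ) * (k.choose j) * g j * t^(n-k) := by
  have h1 := Finset.sum_Ico_Ico_comm 0 (n+1)
      (fun j k => (n.choose k : ℚ) * (k.choose j) * g j * t^(k-j))
  have h2 := Finset.sum_Ico_Ico_comm 0 (n+1)
      (fun j k => (n.choose k : ℚ) * (k.choose j) * g j * t^(n-k))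
  simp only [← Finset.range_eq_Ico] at h1 h2
  rw [← h1, ← h2]
  refine Finset.sum_congr rfl (fun j hj => ?_)
  rw [Finset.mem_range] at hj
  rw [Finset.sum_Ico_eq_sum_range, Finset.sum_Ico_eq_sum_range]
  rw [← Finset.sum_range_reflect]
  refine Finset.sum_congr rfl (fun i hi => ?_)
  rw [Finset.mem_range] at hi
  have hj' : j ≤ n := by omega
  have e3 : n + 1 - j - 1 - i = n - j - i := by omega
  rw [e3]
  have e1 : j + (n - j - i) - j = n - j - i := by omega
  have e2 : n - (j + i) = n - j - i := by omega
  rw [e1, e2]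
  have c1 : (n.choose (j + (n - j - i))) * ((j + (n - j - i)).choose j)
      = (n.choose (j + i)) * ((j + i).choose j) := by
    rw [Nat.choose_mul (n := n) (by omega : j ≤ j + (n - j - i)),
        Nat.choose_mul (n := n) (by omega : j ≤ j + i)]
    have e4 : j + (n - j - i) - j = n - j - i := by omega
    have e5 : j + i - j = i := by omega
    rw [e4, e5, ← Nat.choose_symm (by omega : i ≤ n - j)]
  have c2 := congrArg (Nat.cast : ℕ → ℚ) c1
  push_cast at c2
  linear_combination (g j * t ^ (n - j - i)) * c2

lemma ev_translate (n : ℕ) (y t : ℚ) :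
    ev n (y + t) = ∑ k ∈ range (n+1), (n.choose k : ℚ) * ev k y * t^(n-k) := by
  induction n using Nat.strong_induction_on with
  | _ n ih =>
  set R := ∑ k ∈ range (n+1), (n.choose k : ℚ) * ev k y * t^(n-k) with hR
  set W1 := ∑ k ∈ range (n+1), ∑ j ∈ range (k+1),
      (n.choose k : ℚ) * (k.choose j) * ev j y * t^(k-j) with hW1
  set W2 := ∑ k ∈ range (n+1), ∑ j ∈ range (k+1),
      (n.choose k : ℚ) * (k.choose j) * ev j y * t^(n-k) with hW2
  have W12 : W1 = W2 := tri_eq n t (fun j => ev j y)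
  set S1 := ∑ k ∈ range n, (n.choose k : ℚ) * ev k (y + t) with hS1
  set S2 := ∑ k ∈ range (n+1), ∑ j ∈ range k,
      (n.choose k : ℚ) * (k.choose j) * ev j y * t^(n-k) with hS2
  have h1 : W1 = S1 + R := by
    rw [hW1, Finset.sum_range_succ, hS1]
    congr 1
    · refine Finset.sum_congr rfl fun k hk => ?_
      rw [Finset.mem_range] at hk
      rw [ih k hk, Finset.mul_sum]
      refine Finset.sum_congr rfl fun j hj => ?_
      ring
    · rw [hR]
      refine Finset.sum_congr rfl fun j hj => ?_
      rw [Nat.choose_self]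
      push_cast
      ring
  have h2 : W2 = S2 + R := by
    rw [hW2, hS2, hR, ← Finset.sum_add_distrib]
    refine Finset.sum_congr rfl fun k hk => ?_
    rw [Finset.sum_range_succ, Nat.choose_self]
    push_cast
    ring
  have h3 : R = (y + t)^n - (1/2) * S2 := by
    have expand : R = ∑ k ∈ range (n+1),
        ((n.choose k : ℚ) * y^k * t^(n-k)
          - (1/2) * ∑ j ∈ range k, (n.choose k : ℚ) * (k.choose j) * ev j y * t^(n-k)) := by
      rw [hR]
      refine Finset.sum_congr rfl fun k hk => ?_
      have hinner : ∑ j ∈ range k, (n.choose k : ℚ) * (k.choose j) * ev j y * t^(n-k)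
          = (n.choose k : ℚ) * t^(n-k) * ∑ j ∈ range k, (k.choose j : ℚ) * ev j y := by
        rw [Finset.mul_sum]
        exact Finset.sum_congr rfl fun j _ => by ring
      rw [ev_def k y, hinner]
      ring
    rw [expand, Finset.sum_sub_distrib, add_pow, ← Finset.mul_sum, hS2]
    congr 1
    refine Finset.sum_congr rfl fun k hk => ?_
    ring
  have h4 : ev n (y + t) = (y + t)^n - (1/2) * S1 := by
    rw [ev_def n (y + t), hS1]
  rw [h4]
  have : S1 = S2 := by
    have := W12
    rw [h1, h2] at this
    linarith
  rw [this]
  linarith [h3]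

lemma ev_step (n : ℕ) (x : ℚ) : ev n (x + 1) + ev n x = 2 * x ^ n := by
  have h := ev_translate n x 1
  simp only [one_pow, mul_one] at h
  rw [h]
  have := ev_sum n x
  linarith [this]

lemma ev_reflect (n : ℕ) (x : ℚ) : ev n (1 - x) = (-1)^n * ev n x := by
  set g : Polynomial ℚ := eulerPoly n - (-1)^n • (eulerPoly n).comp (1 - Polynomial.X) with hg
  have hgev : ∀ u : ℚ, g.eval u = ev n u - (-1)^n * ev n (1 - u) := by
    intro u
    simp [hg, ev, Polynomial.eval_comp]
  have hstep : ∀ u : ℚ, g.eval (u + 1) = - g.eval u := by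
    intro u
    rw [hgev, hgev]
    have h1 : ev n (u + 1) + ev n u = 2 * u ^ n := ev_step n u
    have h2 : ev n (-u + 1) + ev n (-u) = 2 * (-u) ^ n := ev_step n (-u)
    have e1 : (1 : ℚ) - (u + 1) = -u := by ring
    have e2 : (1 : ℚ) - u = -u + 1 := by ring
    rw [e1, e2]
    rcases Nat.even_or_odd n with he | ho
    · rw [he.neg_one_pow]
      rw [he.neg_pow] at h2
      linarith
    · rw [ho.neg_one_pow]
      rw [ho.neg_pow] at h2
      linarith
  have hconst : ∀ m : ℕ, g.eval (2 * (m:ℚ)) = g.eval 0 := by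
    intro m
    induction m with
    | zero => norm_num
    | succ m ihm =>
      push_cast
      have e : (2 * ((m:ℚ) + 1)) = (2 * (m:ℚ) + 1) + 1 := by ring
      rw [e, hstep (2 * (m:ℚ) + 1), hstep (2 * (m:ℚ)), neg_neg, ihm]
  have hzero : g - Polynomial.C (g.eval 0) = 0 := by
    apply Polynomial.eq_zero_of_infinite_isRoot
    apply Set.infinite_of_injective_forall_mem
      (f := fun m : ℕ => ((2 * m : ℕ) : ℚ))
    · intro a b hab
      simp only [Nat.cast_inj] at hab
      omega
    · intro m
      simp only [Set.mem_setOf_eq, Polynomial.IsRoot, Polynomial.eval_sub, Polynomial.eval_C]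
      rw [show ((2 * m : ℕ) : ℚ) = 2 * (m:ℚ) by push_cast; ring, hconst m]
      ring
  have hgconst : ∀ u : ℚ, g.eval u = g.eval 0 := by
    intro u
    have h := congrArg (Polynomial.eval u) hzero
    simp only [Polynomial.eval_sub, Polynomial.eval_C, Polynomial.eval_zero] at h
    linarith
  have hc0 : g.eval 0 = 0 := by
    have h1 := hstep 0
    rw [hgconst (0 + 1)] at h1
    linarith
  have hx := hgconst x
  rw [hc0, hgev] at hx
  rcases Nat.even_or_odd n with he | ho
  · rw [he.neg_one_pow] at hx ⊢
    linarith
  · rw [ho.neg_one_pow] at hx ⊢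
    linarith

lemma eulerNumber_odd (m : ℕ) (hm : Odd m) : eulerNumber m = 0 := by
  have h := ev_reflect m (1/2)
  rw [show (1 : ℚ) - 1/2 = 1/2 by norm_num, hm.neg_one_pow] at h
  have : ev m (1/2) = 0 := by linarith
  rw [eulerNumber, show (eulerPoly m).eval (1/2) = ev m (1/2) from rfl, this, mul_zero]

lemma eulerNumber_zero : eulerNumber 0 = 1 := by
  rw [eulerNumber]
  have := ev_def 0 (1/2)
  rw [ev] at this
  simp at this ⊢
  rw [this]

lemma ev_one_even_zero (r : ℕ) (hr : Even r) (h1 : 1 ≤ r) : ev r 1 = 0 := by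
  have hstep := ev_step r 0
  have hrefl := ev_reflect r 0
  rw [hr.neg_one_pow] at hrefl
  simp only [zero_add, sub_zero, mul_one] at hstep hrefl
  have : (0:ℚ) ^ r = 0 := zero_pow (by omega)
  rw [this] at hstep
  linarith

lemma Q_eq (r : ℕ) : ∑ k ∈ range (r+1), (r.choose k : ℚ) * eulerNumber k = 2^r * ev r 1 := by
  have h := ev_translate r (1/2) (1/2)
  rw [show (1/2 : ℚ) + 1/2 = 1 by norm_num] at h
  rw [h, Finset.mul_sum]
  refine Finset.sum_congr rfl fun k hk => ?_
  rw [Finset.mem_range] at hk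
  rw [eulerNumber, show (eulerPoly k).eval (1/2) = ev k (1/2) from rfl]
  have h2 : (2:ℚ)^r * (1/2)^(r-k) = 2^k := by
    have hr : r = k + (r - k) := by omega
    rw [hr, pow_add, Nat.add_sub_cancel_left]
    field_simp
    rw [← mul_pow]; norm_num
  rw [← h2]; ring

lemma Q_even_zero (r : ℕ) (hr : Even r) (h1 : 1 ≤ r) :
    ∑ k ∈ range (r+1), (r.choose k : ℚ) * eulerNumber k = 0 := by
  rw [Q_eq, ev_one_even_zero r hr h1, mul_zero]

noncomputable def eC (k : ℕ) : ℂ := ((eulerNumber k : ℚ) : ℂ)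

lemma eC_odd (m : ℕ) (hm : Odd m) : eC m = 0 := by
  rw [eC, eulerNumber_odd m hm]; norm_num

lemma eC_zero : eC 0 = 1 := by rw [eC, eulerNumber_zero]; norm_num

lemma QC_even_zero (r : ℕ) (hr : Even r) (h1 : 1 ≤ r) :
    ∑ k ∈ range (r+1), (r.choose k : ℂ) * eC k = 0 := by
  have h := congrArg (fun q : ℚ => (q : ℂ)) (Q_even_zero r hr h1)
  push_cast at h
  rw [← h]
  exact Finset.sum_congr rfl fun k _ => by rw [eC]

lemma sum_even_only (n : ℕ) (f : ℕ → ℂ) (hf : ∀ m, Odd m → f m = 0) :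
    ∑ m ∈ range (n+1), f m = ∑ k ∈ range (n/2+1), f (2*k) := by
  induction n with
  | zero => simp
  | succ n ihn =>
    rw [Finset.sum_range_succ, ihn]
    rcases Nat.even_or_odd (n+1) with he | ho
    · have h2 : (n+1)/2 = n/2 + 1 := by
        obtain ⟨K, hK⟩ := he
        omega
      rw [h2]
      have h3 : 2 * (n/2 + 1) = n + 1 := by
        obtain ⟨K, hK⟩ := he
        omega
      conv_rhs => rw [Finset.sum_range_succ]
      rw [h3]
    · rw [hf _ ho, add_zero]
      have h2 : (n+1)/2 = n/2 := by
        obtain ⟨K, hK⟩ := ho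
        omega
      rw [h2]

lemma key_s15 (n : ℕ) (u t : ℂ) :
    ∑ k ∈ range (n/2+1), (n.choose (2*k) : ℂ) *
      (((u+t)^(n-2*k) + (u-t)^(n-2*k))/2) * (t^2)^k * eC (2*k) = u^n := by
  set f : ℕ → ℂ := fun m => (n.choose m : ℂ) *
      (((u+t)^(n-m) + (u-t)^(n-m))/2) * t^m * eC m with hf
  have hodd : ∀ m, Odd m → f m = 0 := by
    intro m hm
    rw [hf]
    simp only [eC_odd m hm, mul_zero]
  have stepA : ∑ k ∈ range (n/2+1), (n.choose (2*k) : ℂ) *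
      (((u+t)^(n-2*k) + (u-t)^(n-2*k))/2) * (t^2)^k * eC (2*k)
      = ∑ m ∈ range (n+1), f m := by
    rw [sum_even_only n f hodd]
    refine Finset.sum_congr rfl fun k _ => ?_
    rw [hf]
    simp only [← pow_mul]
  rw [stepA]
  set A : ℂ → ℂ := fun v => ∑ m ∈ range (n+1),
      (n.choose m : ℂ) * eC m * v^m * (u+v)^(n-m) with hA
  have stepB : ∑ m ∈ range (n+1), f m = (1/2) * (A t + A (-t)) := by
    rw [hA]
    simp only
    rw [← Finset.sum_add_distrib, Finset.mul_sum]
    refine Finset.sum_congr rfl fun m _ => ?_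
    rw [hf]
    have huv : u + -t = u - t := by ring
    rw [huv]
    rcases Nat.even_or_odd m with he | ho
    · rw [he.neg_pow]
      ring
    · simp only [eC_odd m ho, mul_zero, zero_mul]
      ring
  rw [stepB]
  -- expand A
  set G : ℕ → ℕ → ℂ := fun m r => (n.choose m : ℂ) * eC m *
      ((n-m).choose (r-m) : ℂ) * (t^r + (-t)^r) * u^(n-r) with hG
  have expandA : A t + A (-t) = ∑ m ∈ range (n+1), ∑ r ∈ Finset.Ico m (n+1), G m r := by
    rw [hA]
    simp only
    rw [← Finset.sum_add_distrib]
    refine Finset.sum_congr rfl fun m hm => ?_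
    rw [Finset.mem_range] at hm
    have hp1 : (u + t)^(n-m) = ∑ j ∈ range (n-m+1),
        t^j * u^(n-m-j) * ((n-m).choose j : ℂ) := by
      rw [add_comm u t, add_pow]
    have hp2 : (u + -t)^(n-m) = ∑ j ∈ range (n-m+1),
        (-t)^j * u^(n-m-j) * ((n-m).choose j : ℂ) := by
      rw [show u + -t = -t + u by ring, add_pow]
    rw [hp1, hp2, Finset.mul_sum, Finset.mul_sum,
      ← Finset.sum_add_distrib, Finset.sum_Ico_eq_sum_range]
    have hnm : n + 1 - m = n - m + 1 := by omega
    rw [hnm]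
    refine Finset.sum_congr rfl fun j hj => ?_
    rw [Finset.mem_range] at hj
    rw [hG]
    simp only
    have e1 : m + j - m = j := by omega
    have e2 : n - (m + j) = n - m - j := by omega
    rw [e1, e2, pow_add t m j, pow_add (-t) m j]
    ring
  have swap : ∑ m ∈ range (n+1), ∑ r ∈ Finset.Ico m (n+1), G m r
      = ∑ r ∈ range (n+1), ∑ m ∈ range (r+1), G m r := by
    have h := Finset.sum_Ico_Ico_comm 0 (n+1) G
    simpa only [← Finset.range_eq_Ico] using h
  have inner : ∀ r ∈ range (n+1), ∑ m ∈ range (r+1), G m r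
      = (n.choose r : ℂ) * (t^r + (-t)^r) * u^(n-r)
          * ∑ m ∈ range (r+1), (r.choose m : ℂ) * eC m := by
    intro r hr
    rw [Finset.mem_range] at hr
    rw [Finset.mul_sum]
    refine Finset.sum_congr rfl fun m hm => ?_
    rw [Finset.mem_range] at hm
    rw [hG]
    simp only
    have hc := Nat.choose_mul (n := n) (show m ≤ r by omega)
    have hc' := congrArg (Nat.cast : ℕ → ℂ) hc
    push_cast at hc'
    linear_combination (eC m * (t^r + (-t)^r) * u^(n-r)) * hc'.symm
  have final : ∑ r ∈ range (n+1), ∑ m ∈ range (r+1), G m r = 2 * u^n := by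
    rw [Finset.sum_congr rfl inner]
    rw [Finset.sum_eq_single 0]
    · rw [Finset.sum_range_one, eC_zero]
      norm_num
    · intro r hrr hr0
      rcases Nat.even_or_odd r with he | ho
      · rw [QC_even_zero r he (by omega), mul_zero]
      · rw [ho.neg_pow]
        ring_nf
    · intro h
      simp at h
  rw [expandA, swap, final]
  ring

lemma binet (x s : ℂ) (hs : s^2 = 9*x^2 - 1) (m : ℕ) :
    lucasBalancingPoly x m = ((3*x+s)^m + (3*x-s)^m)/2 ∧
    s * balancingPoly x m = ((3*x+s)^m - (3*x-s)^m)/2 := by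
  induction m using Nat.strong_induction_on with
  | _ m ih =>
    match m with
    | 0 => simp [lucasBalancingPoly, balancingPoly]
    | 1 =>
      refine ⟨?_, ?_⟩
      · show (3*x : ℂ) = _
        ring
      · show s * 1 = _
        ring
    | (m+2) =>
      obtain ⟨L1, B1⟩ := ih (m+1) (by omega)
      obtain ⟨L0, B0⟩ := ih m (by omega)
      refine ⟨?_, ?_⟩
      · show 6*x*lucasBalancingPoly x (m+1) - lucasBalancingPoly x m = _
        rw [L1, L0]
        linear_combination (-(((3*x+s)^m + (3*x-s)^m)/2)) * hs
      · show s * (6*x*balancingPoly x (m+1) - balancingPoly x m) = _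
        rw [mul_sub, show s * (6*x*balancingPoly x (m+1)) = 6*x*(s*balancingPoly x (m+1)) by ring,
          B1, B0]
        linear_combination (-(((3*x+s)^m - (3*x-s)^m)/2)) * hs

theorem stmt15 (n : ℕ) (x s : ℂ) (hs : s ^ 2 = 9 * x ^ 2 - 1) :
    ∑ k ∈ Finset.range (n / 2 + 1), (n.choose (2 * k) : ℂ) *
      lucasBalancingPoly x (2 * (n - 2 * k)) * (36 * x ^ 2 * (9 * x ^ 2 - 1)) ^ k *
      ((eulerNumber (2 * k) : ℚ) : ℂ)
      = ∑ k ∈ Finset.range (n + 1), (n.choose k : ℂ) *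
          (lucasBalancingPoly x (2 * k) - s * balancingPoly x (2 * k)) *
          (6 * x * s) ^ (n - k) := by
  have hb := binet x s hs
  set u : ℂ := 18*x^2 - 1 with hu
  set t : ℂ := 6*x*s with ht
  have hα : (3*x+s)^2 = u + t := by rw [hu, ht]; linear_combination hs
  have hβ : (3*x-s)^2 = u - t := by rw [hu, ht]; linear_combination hs
  have hL : ∀ m, lucasBalancingPoly x (2*m) = ((u+t)^m + (u-t)^m)/2 := by
    intro m
    rw [(hb (2*m)).1, pow_mul, pow_mul, hα, hβ]
  have hLB : ∀ m, lucasBalancingPoly x (2*m) - s * balancingPoly x (2*m) = (u-t)^m := by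
    intro m
    rw [(hb (2*m)).1, show s * balancingPoly x (2*m) = ((3*x+s)^(2*m) - (3*x-s)^(2*m))/2
      from (hb (2*m)).2, pow_mul, pow_mul, hα, hβ]
    ring
  have ht2 : (36 * x ^ 2 * (9 * x ^ 2 - 1)) = t^2 := by
    rw [ht]; linear_combination (-36*x^2) * hs
  have hLHS : ∑ k ∈ Finset.range (n / 2 + 1), (n.choose (2 * k) : ℂ) *
      lucasBalancingPoly x (2 * (n - 2 * k)) * (36 * x ^ 2 * (9 * x ^ 2 - 1)) ^ k *
      ((eulerNumber (2 * k) : ℚ) : ℂ)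
      = ∑ k ∈ Finset.range (n/2 + 1), (n.choose (2*k) : ℂ) *
        (((u+t)^(n-2*k) + (u-t)^(n-2*k))/2) * (t^2)^k * eC (2*k) := by
    refine Finset.sum_congr rfl fun k _ => ?_
    rw [hL (n - 2*k), ht2, eC]
  rw [hLHS, key_s15 n u t]
  have hRHS : ∑ k ∈ Finset.range (n + 1), (n.choose k : ℂ) *
      (lucasBalancingPoly x (2 * k) - s * balancingPoly x (2 * k)) * t ^ (n - k)
      = ∑ k ∈ Finset.range (n + 1), (u-t)^k * t^(n-k) * (n.choose k : ℂ) := by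
    refine Finset.sum_congr rfl fun k _ => ?_
    rw [hLB k]
    ring
  rw [hRHS, ← add_pow]
  ring_nf
end
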